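/- arXiv:1801.03229 — 7 statements merged into one kernel-verified Lean document; each statement's English description precedes it below -/
import Mathlib

section
/- Let p be a prime and let G = Z_p ⊕ Z_{p²}. The number of automorphisms of G whose set of fixed points has exactly one element (i.e., the number of fixed-point-free automorphisms of G) is p³(p-2)². -/
set_option linter.unusedSectionVars false

namespace ThetaAux
variable (p : ℕ) [hp : Fact p.Prime]

lemma pp : ((p : ZMod (p ^ 2)) * p) = 0 := by
  have : ((p ^ 2 : ℕ) : ZMod (p ^ 2)) = 0 := ZMod.natCast_self _
  push_cast at this
  linear_combination this

/-- reduction mod p -/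
def u (d : ZMod (p ^ 2)) : ZMod p :=
  ZMod.castHom (dvd_pow_self p two_ne_zero) (ZMod p) d

/-- multiplication-by-p embedding -/
def phi : ZMod p →+ ZMod (p ^ 2) :=
  ZMod.lift p ⟨zmultiplesHom _ (p : ZMod (p ^ 2)), by
    simpa [zmultiplesHom_apply] using pp p⟩

lemma phi_natCast (n : ℕ) : phi p ((n : ℕ) : ZMod p) = (n : ZMod (p ^ 2)) * p := by
  have := ZMod.lift_coe p ⟨zmultiplesHom _ ((p : ℕ) : ZMod (p ^ 2)), by
    simpa [zmultiplesHom_apply] using pp p⟩ (n : ℤ)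
  simpa [phi, zmultiplesHom_apply, zsmul_eq_mul] using this

lemma phi_apply (w : ZMod p) : phi p w = (w.val : ZMod (p ^ 2)) * p := by
  conv_lhs => rw [show w = ((w.val : ℕ) : ZMod p) from (ZMod.natCast_rightInverse w).symm]
  rw [phi_natCast]

lemma phi_eq_zero_iff (w : ZMod p) : phi p w = 0 ↔ w = 0 := by
  haveI : NeZero (p ^ 2) := ⟨pow_ne_zero 2 hp.out.ne_zero⟩
  rw [phi_apply]
  constructor
  · intro h
    have h2 : ((w.val * p : ℕ) : ZMod (p ^ 2)) = 0 := by push_cast; linear_combination h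
    rw [ZMod.natCast_eq_zero_iff] at h2
    have hlt : w.val * p < p ^ 2 := by
      have hv := ZMod.val_lt w
      calc w.val * p < p * p := by
            exact Nat.mul_lt_mul_of_lt_of_le hv le_rfl hp.out.pos
      _ = p ^ 2 := (sq p).symm
    have := Nat.eq_zero_of_dvd_of_lt h2 hlt
    have : w.val = 0 := by
      rcases Nat.mul_eq_zero.mp this with h | h
      · exact h
      · exact absurd h hp.out.ne_zero
    exact (ZMod.val_eq_zero w).mp this
  · rintro rfl; simp

lemma phi_injective : Function.Injective (phi p) :=
  (injective_iff_map_eq_zero _).mpr fun w hw => (phi_eq_zero_iff p w).mp hw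

lemma phi_apply' (w : ZMod p) : phi p w = ((w.val * p : ℕ) : ZMod (p ^ 2)) := by
  rw [phi_apply]; push_cast; ring

lemma u_natCast' (n : ℕ) : u p ((n : ℕ) : ZMod (p ^ 2)) = (n : ZMod p) := by
  simp [u]

lemma u_phi (w : ZMod p) : u p (phi p w) = 0 := by
  rw [phi_apply', u_natCast']
  push_cast
  simp

lemma u_natCast (n : ℕ) : u p ((n : ℕ) : ZMod (p ^ 2)) = (n : ZMod p) := by
  simp [u]

lemma mul_phi (d : ZMod (p ^ 2)) (w : ZMod p) : d * phi p w = phi p (u p d * w) := by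
  haveI : NeZero (p ^ 2) := ⟨pow_ne_zero 2 hp.out.ne_zero⟩
  rw [phi_apply, phi_apply]
  conv_lhs => rw [show d = ((d.val : ℕ) : ZMod (p ^ 2)) from (ZMod.natCast_rightInverse d).symm]
  -- goal: (d.val) * (w.val * p) = ((u d * w).val) * p
  have h1 : u p d * w = ((d.val * w.val : ℕ) : ZMod p) := by
    push_cast
    rw [show ((d.val : ℕ) : ZMod p) = u p d from by rw [← u_natCast p d.val, ZMod.natCast_rightInverse d],
      ZMod.natCast_val w, ZMod.cast_id]
  rw [h1]
  -- now: ((u d * w).val as ((d.val*w.val : ZMod p)).val) * p = d.val * (w.val * p)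
  -- both equal (d.val * w.val * p : ℕ) mod p^2, since ((m mod p))*p ≡ m*p mod p^2
  have key : ∀ m : ℕ, (((((m : ℕ) : ZMod p)).val : ZMod (p ^ 2)) * p) = ((m : ℕ) : ZMod (p ^ 2)) * p := by
    intro m
    rw [ZMod.val_natCast]
    conv_rhs => rw [← Nat.mod_add_div m p]
    push_cast
    have hsq : ((p : ZMod (p ^ 2))) ^ 2 = 0 := (pow_two ((p : ℕ) : ZMod (p ^ 2))).trans (pp p)
    linear_combination (-(↑(m / p)) : ZMod (p ^ 2)) * hsq
  rw [key (d.val * w.val)]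
  push_cast
  ring

lemma exists_phi_of_mul_self (z : ZMod (p ^ 2)) (h : (p : ZMod (p ^ 2)) * z = 0) :
    ∃ w, z = phi p w := by
  haveI : NeZero (p ^ 2) := ⟨pow_ne_zero 2 hp.out.ne_zero⟩
  have h2 : ((p * z.val : ℕ) : ZMod (p ^ 2)) = 0 := by
    push_cast
    rw [ZMod.natCast_val, ZMod.cast_id]
    exact h
  rw [ZMod.natCast_eq_zero_iff] at h2
  have hdvd : p ∣ z.val := by
    rcases h2 with ⟨k, hk⟩
    have hp0 := hp.out.ne_zero
    refine ⟨k, ?_⟩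
    have : p * z.val = p * (p * k) := by rw [hk]; ring
    exact Nat.eq_of_mul_eq_mul_left hp.out.pos this
  rcases hdvd with ⟨k, hk⟩
  refine ⟨(k : ZMod p), ?_⟩
  rw [phi_natCast]
  conv_lhs => rw [show z = ((z.val : ℕ) : ZMod (p ^ 2)) from (ZMod.natCast_rightInverse z).symm]
  rw [hk]
  push_cast
  ring

lemma u_val (z : ZMod (p ^ 2)) : u p z = ((z.val : ℕ) : ZMod p) := by
  conv_lhs => rw [show z = ((z.val : ℕ) : ZMod (p ^ 2)) from (ZMod.natCast_rightInverse z).symm]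
  rw [u_natCast']

lemma exists_phi_of_u_eq_zero (z : ZMod (p ^ 2)) (h : u p z = 0) : ∃ w, z = phi p w := by
  haveI : NeZero (p ^ 2) := ⟨pow_ne_zero 2 hp.out.ne_zero⟩
  apply exists_phi_of_mul_self
  rw [u_val] at h
  rcases (ZMod.natCast_eq_zero_iff z.val p).mp h with ⟨k, hk⟩
  have : (p : ZMod (p ^ 2)) * z = ((p * z.val : ℕ) : ZMod (p ^ 2)) := by
    push_cast
    rw [ZMod.natCast_val, ZMod.cast_id]
  rw [this, hk]
  have : p * (p * k) = p ^ 2 * k := by ring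
  rw [this]
  push_cast
  have hsq : ((p : ZMod (p ^ 2))) ^ 2 = 0 := (pow_two ((p : ℕ) : ZMod (p ^ 2))).trans (pp p)
  linear_combination (↑k : ZMod (p ^ 2)) * hsq


lemma u_add (x y : ZMod (p ^ 2)) : u p (x + y) = u p x + u p y := map_add (ZMod.castHom (dvd_pow_self p two_ne_zero) (ZMod p)) x y

lemma u_mul (x y : ZMod (p ^ 2)) : u p (x * y) = u p x * u p y := map_mul (ZMod.castHom (dvd_pow_self p two_ne_zero) (ZMod p)) x y

lemma u_zero : u p 0 = 0 := map_zero (ZMod.castHom (dvd_pow_self p two_ne_zero) (ZMod p))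

lemma u_one : u p 1 = 1 := map_one (ZMod.castHom (dvd_pow_self p two_ne_zero) (ZMod p))

lemma u_p : u p ((p : ℕ) : ZMod (p ^ 2)) = 0 := by rw [u_natCast]; exact ZMod.natCast_self p

lemma mul_p_eq_zero (d : ZMod (p ^ 2)) (hd : u p d = 0) : d * ((p : ℕ) : ZMod (p ^ 2)) = 0 := by
  rcases exists_phi_of_u_eq_zero p d hd with ⟨w, rfl⟩
  rw [phi_apply, mul_assoc]
  rw [pp]
  ring

/-- the endomorphism with "matrix" (a b; pc d) -/
def E (a b c : ZMod p) (d : ZMod (p ^ 2)) :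
    (ZMod p × ZMod (p ^ 2)) →+ (ZMod p × ZMod (p ^ 2)) where
  toFun g := (a * g.1 + b * u p g.2, phi p (c * g.1) + d * g.2)
  map_zero' := by simp [u]
  map_add' g h := by
    simp only [Prod.fst_add, Prod.snd_add, Prod.mk_add_mk, Prod.mk.injEq]
    constructor
    · rw [u_add]
      ring
    · rw [show c * (g.1 + h.1) = c * g.1 + c * h.1 from by ring, map_add]
      ring

lemma E_apply (a b c : ZMod p) (d : ZMod (p ^ 2)) (g : ZMod p × ZMod (p ^ 2)) :
    E p a b c d g = (a * g.1 + b * u p g.2, phi p (c * g.1) + d * g.2) := rfl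

lemma one_ne_zero' : (1 : ZMod p) ≠ 0 := by
  haveI : Nontrivial (ZMod p) := ZMod.nontrivial_iff.mpr hp.out.one_lt.ne'
  exact one_ne_zero

lemma p_ne_zero' : ((p : ℕ) : ZMod (p ^ 2)) ≠ 0 := by
  haveI : NeZero (p ^ 2) := ⟨pow_ne_zero 2 hp.out.ne_zero⟩
  intro h
  rw [ZMod.natCast_eq_zero_iff] at h
  have := Nat.le_of_dvd hp.out.pos h
  nlinarith [hp.out.one_lt]

lemma ker_iff (a b c : ZMod p) (d : ZMod (p ^ 2)) :
    (∀ g, E p a b c d g = 0 → g = 0) ↔ (a ≠ 0 ∧ u p d ≠ 0) := by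
  constructor
  · intro H
    by_contra hcon
    rw [not_and_or, not_not, not_not] at hcon
    have hcase : u p d = 0 ∨ (a = 0 ∧ u p d ≠ 0) := by tauto
    rcases hcase with hd | ⟨ha, hd⟩
    · -- g = (0, p)
      have hker : E p a b c d (0, ((p : ℕ) : ZMod (p ^ 2))) = 0 := by
        rw [E_apply]
        have h1 : b * u p ((p : ℕ) : ZMod (p ^ 2)) = 0 := by rw [u_p]; ring
        have h2 : d * ((p : ℕ) : ZMod (p ^ 2)) = 0 := mul_p_eq_zero p d hd
        rw [Prod.ext_iff]
        constructor
        · simpa using h1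
        · simpa using h2
      have := H _ hker
      rw [Prod.ext_iff] at this
      exact p_ne_zero' p this.2
    · -- g = (u d, phi (-c))
      have hker : E p a b c d (u p d, phi p (-c)) = 0 := by
        rw [E_apply]
        rw [Prod.ext_iff]
        constructor
        · simp only [Prod.fst_zero]
          rw [ha, u_phi]
          ring
        · simp only
          rw [mul_phi, ← map_add]
          rw [show c * u p d + u p d * (-c) = 0 from by ring]
          simp
      have := H _ hker
      rw [Prod.ext_iff] at this
      exact hd this.1
  · rintro ⟨ha, hd⟩ ⟨x, y⟩ hg
    rw [E_apply, Prod.ext_iff] at hg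
    obtain ⟨h1, h2⟩ := hg
    simp only at h1 h2
    have h2' : u p d * u p y = 0 := by
      have h3 := congrArg (u p) h2
      rw [u_add, u_mul, u_phi] at h3
      simpa [u_zero] using h3
    have hy : u p y = 0 := by
      rcases mul_eq_zero.mp h2' with h | h
      · exact absurd h hd
      · exact h
    have hx : x = 0 := by
      rw [hy, mul_zero, add_zero] at h1
      rcases mul_eq_zero.mp h1 with h | h
      · exact absurd h ha
      · exact h
    rcases exists_phi_of_u_eq_zero p y hy with ⟨w, rfl⟩
    rw [hx, mul_zero] at h2
    simp only [map_zero, zero_add] at h2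
    rw [mul_phi] at h2
    have hw : u p d * w = 0 := (phi_eq_zero_iff p _).mp h2
    rcases mul_eq_zero.mp hw with h | h
    · exact absurd h hd
    · rw [hx, h]
      simp


lemma E_one_zero (a b c : ZMod p) (d : ZMod (p ^ 2)) :
    E p a b c d (1, 0) = (a, phi p c) := by
  rw [E_apply]
  simp [u_zero]

lemma E_zero_one (a b c : ZMod p) (d : ZMod (p ^ 2)) :
    E p a b c d (0, 1) = (b, d) := by
  rw [E_apply]
  simp [u_one]

lemma hom_ext {f g : (ZMod p × ZMod (p ^ 2)) →+ (ZMod p × ZMod (p ^ 2))}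
    (h1 : f (1, 0) = g (1, 0)) (h2 : f (0, 1) = g (0, 1)) : f = g := by
  haveI : NeZero (p ^ 2) := ⟨pow_ne_zero 2 hp.out.ne_zero⟩
  apply AddMonoidHom.ext
  rintro ⟨x, y⟩
  have hg : ((x, y) : ZMod p × ZMod (p ^ 2)) =
      x.val • ((1 : ZMod p), (0 : ZMod (p ^ 2))) + y.val • ((0 : ZMod p), (1 : ZMod (p ^ 2))) := by
    rw [Prod.smul_mk, Prod.smul_mk, Prod.mk_add_mk, Prod.mk.injEq]
    constructor
    · simp [nsmul_eq_mul, ZMod.natCast_val, ZMod.cast_id]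
    · simp [nsmul_eq_mul, ZMod.natCast_val, ZMod.cast_id]
  rw [hg, map_add, map_add, map_nsmul, map_nsmul, map_nsmul, map_nsmul, h1, h2]

lemma E_surj (f : (ZMod p × ZMod (p ^ 2)) →+ (ZMod p × ZMod (p ^ 2))) :
    ∃ a b c d, f = E p a b c d := by
  haveI : NeZero (p ^ 2) := ⟨pow_ne_zero 2 hp.out.ne_zero⟩
  have hz : ((p : ℕ) : ZMod (p ^ 2)) * (f (1, 0)).2 = 0 := by
    have h0 : ((p : ℕ) • ((1 : ZMod p), (0 : ZMod (p ^ 2)))) = 0 := by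
      rw [Prod.smul_mk]
      rw [Prod.mk_eq_zero]
      constructor
      · simp [nsmul_eq_mul, ZMod.natCast_self]
      · simp
    have h1 : (p : ℕ) • f (1, 0) = 0 := by rw [← map_nsmul, h0, map_zero]
    have h2 : (p : ℕ) • (f (1, 0)).2 = 0 := by
      have h3 := congrArg Prod.snd h1
      simpa [Prod.smul_snd] using h3
    rw [nsmul_eq_mul] at h2
    exact h2
  rcases exists_phi_of_mul_self p _ hz with ⟨c, hc⟩
  refine ⟨(f (1, 0)).1, (f (0, 1)).1, c, (f (0, 1)).2, hom_ext p ?_ ?_⟩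
  · rw [E_one_zero]
    rw [Prod.ext_iff]
    exact ⟨rfl, hc⟩
  · rw [E_zero_one]

lemma E_inj {a b c : ZMod p} {d : ZMod (p ^ 2)} {a' b' c' : ZMod p} {d' : ZMod (p ^ 2)}
    (h : E p a b c d = E p a' b' c' d') : a = a' ∧ b = b' ∧ c = c' ∧ d = d' := by
  have h1 := congrArg (fun f : (ZMod p × ZMod (p ^ 2)) →+ _ => f (1, 0)) h
  have h2 := congrArg (fun f : (ZMod p × ZMod (p ^ 2)) →+ _ => f (0, 1)) h
  simp only [E_one_zero, E_zero_one, Prod.mk.injEq] at h1 h2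
  exact ⟨h1.1, h2.1, phi_injective p h1.2, h2.2⟩

lemma sub_id (a b c : ZMod p) (d : ZMod (p ^ 2)) (g : ZMod p × ZMod (p ^ 2)) :
    E p a b c d g = g ↔ E p (a - 1) b c (d - 1) g = 0 := by
  rw [E_apply, E_apply, Prod.ext_iff, Prod.ext_iff]
  apply and_congr
  · constructor <;> intro h <;> · simp only [Prod.fst_zero] at *; linear_combination h
  · constructor <;> intro h <;> · simp only [Prod.snd_zero] at *; linear_combination h

lemma bij_iff (a b c : ZMod p) (d : ZMod (p ^ 2)) :
    Function.Bijective (E p a b c d) ↔ (a ≠ 0 ∧ u p d ≠ 0) := by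
  haveI : NeZero (p ^ 2) := ⟨pow_ne_zero 2 hp.out.ne_zero⟩
  rw [← Finite.injective_iff_bijective, injective_iff_map_eq_zero, ker_iff]

lemma card_fix (f : (ZMod p × ZMod (p ^ 2)) → (ZMod p × ZMod (p ^ 2))) (h0 : f 0 = 0) :
    Nat.card {g : ZMod p × ZMod (p ^ 2) // f g = g} = 1 ↔ ∀ g, f g = g → g = 0 := by
  constructor
  · intro h g hg
    haveI : Nonempty {g : ZMod p × ZMod (p ^ 2) // f g = g} := ⟨⟨0, h0⟩⟩
    haveI := (Nat.card_eq_one_iff_unique.mp h).1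
    have : (⟨g, hg⟩ : {g : ZMod p × ZMod (p ^ 2) // f g = g}) = ⟨0, h0⟩ := Subsingleton.elim _ _
    exact Subtype.ext_iff.mp this
  · intro h
    haveI : Unique {g : ZMod p × ZMod (p ^ 2) // f g = g} :=
      { default := ⟨0, h0⟩, uniq := fun x => Subtype.ext (h x x.2) }
    exact Nat.card_unique


noncomputable def EQ : (ZMod p × ZMod p × ZMod p × ZMod (p ^ 2)) ≃
    ((ZMod p × ZMod (p ^ 2)) →+ (ZMod p × ZMod (p ^ 2))) :=
  Equiv.ofBijective (fun q => E p q.1 q.2.1 q.2.2.1 q.2.2.2)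
    ⟨fun q q' h => by
      obtain ⟨h1, h2, h3, h4⟩ := E_inj p h
      exact Prod.ext h1 (Prod.ext h2 (Prod.ext h3 h4)),
     fun f => by
      rcases E_surj p f with ⟨a, b, c, d, rfl⟩
      exact ⟨(a, b, c, d), rfl⟩⟩

lemma EQ_apply (q : ZMod p × ZMod p × ZMod p × ZMod (p ^ 2)) :
    EQ p q = E p q.1 q.2.1 q.2.2.1 q.2.2.2 := rfl

noncomputable def psi : (ZMod p × ZMod p) ≃ ZMod (p ^ 2) := by
  haveI : NeZero (p ^ 2) := ⟨pow_ne_zero 2 hp.out.ne_zero⟩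
  refine Equiv.ofBijective (fun w => ((w.1.val : ℕ) : ZMod (p ^ 2)) + phi p w.2) ?_
  rw [Fintype.bijective_iff_injective_and_card]
  constructor
  · intro w w' h
    have h1 : w.1 = w'.1 := by
      have := congrArg (u p) h
      rw [u_add, u_add, u_phi, u_phi, u_natCast', u_natCast'] at this
      simpa [ZMod.natCast_val, ZMod.cast_id] using this
    have h2 : phi p w.2 = phi p w'.2 := by
      have h' : ((w.1.val : ℕ) : ZMod (p ^ 2)) + phi p w.2 =
          ((w'.1.val : ℕ) : ZMod (p ^ 2)) + phi p w'.2 := h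
      rw [h1] at h'
      exact add_left_cancel h'
    exact Prod.ext h1 (phi_injective p h2)
  · simp [ZMod.card, pow_two]

lemma u_psi (w : ZMod p × ZMod p) : u p (psi p w) = w.1 := by
  haveI : NeZero (p ^ 2) := ⟨pow_ne_zero 2 hp.out.ne_zero⟩
  show u p (((w.1.val : ℕ) : ZMod (p ^ 2)) + phi p w.2) = w.1
  rw [u_add, u_phi, u_natCast']
  simp [ZMod.natCast_val, ZMod.cast_id]

lemma card_A : Nat.card {a : ZMod p // a ≠ 0 ∧ a ≠ 1} = p - 2 := by
  haveI : Nontrivial (ZMod p) := ZMod.nontrivial_iff.mpr hp.out.one_lt.ne'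
  rw [Nat.card_eq_fintype_card, Fintype.card_subtype]
  have h : (Finset.univ.filter fun a : ZMod p => a ≠ 0 ∧ a ≠ 1) =
      Finset.univ \ ({0, 1} : Finset (ZMod p)) := by
    ext a
    simp [Finset.mem_sdiff, not_or]
  rw [h, Finset.card_sdiff_of_subset (Finset.subset_univ _), Finset.card_univ, ZMod.card]
  have h2 : ({0, 1} : Finset (ZMod p)).card = 2 := by
    rw [Finset.card_insert_of_notMem (by simp), Finset.card_singleton]
  rw [h2]

/-- condition on parameters -/
def cond (q : ZMod p × ZMod p × ZMod p × ZMod (p ^ 2)) : Prop :=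
  (q.1 ≠ 0 ∧ u p q.2.2.2 ≠ 0) ∧ (q.1 ≠ 1 ∧ u p q.2.2.2 ≠ 1)

lemma cond_iff (q : ZMod p × ZMod p × ZMod p × ZMod (p ^ 2)) :
    cond p q ↔ (Function.Bijective (EQ p q) ∧ ∀ g, EQ p q g = g → g = 0) := by
  obtain ⟨a, b, c, d⟩ := q
  rw [EQ_apply]
  simp only
  rw [cond]
  simp only
  apply and_congr
  · exact (bij_iff p a b c d).symm
  · rw [show (∀ g, E p a b c d g = g → g = 0) ↔
        (∀ g, E p (a - 1) b c (d - 1) g = 0 → g = 0) from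
      forall_congr' fun g => imp_congr (sub_id p a b c d g) Iff.rfl]
    rw [ker_iff]
    apply and_congr
    · rw [sub_ne_zero]
    · rw [show u p (d - 1) = u p d - 1 from by
        show (ZMod.castHom (dvd_pow_self p two_ne_zero) (ZMod p)) (d - 1) = _
        rw [map_sub (ZMod.castHom (dvd_pow_self p two_ne_zero) (ZMod p)) d 1, map_one]
        rfl]
      rw [sub_ne_zero]


noncomputable def e1 :
    {f : AddAut (ZMod p × ZMod (p ^ 2)) //
      Nat.card {g : ZMod p × ZMod (p ^ 2) // f g = g} = 1} ≃
    {f : (ZMod p × ZMod (p ^ 2)) →+ (ZMod p × ZMod (p ^ 2)) //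
      Function.Bijective f ∧ ∀ g, f g = g → g = 0} where
  toFun F := ⟨F.1.toAddMonoidHom, F.1.bijective,
    fun g hg => ((card_fix p (⇑F.1) (map_zero F.1)).mp F.2) g hg⟩
  invFun F := ⟨AddEquiv.ofBijective F.1 F.2.1,
    (card_fix p (⇑(AddEquiv.ofBijective F.1 F.2.1)) (map_zero _)).mpr
      (fun g hg => F.2.2 g hg)⟩
  left_inv F := Subtype.ext (by ext g <;> rfl)
  right_inv F := Subtype.ext (by ext g <;> rfl)

noncomputable def e2 :
    {f : (ZMod p × ZMod (p ^ 2)) →+ (ZMod p × ZMod (p ^ 2)) //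
      Function.Bijective f ∧ ∀ g, f g = g → g = 0} ≃
    {q : ZMod p × ZMod p × ZMod p × ZMod (p ^ 2) // cond p q} :=
  (Equiv.subtypeEquiv (EQ p) (cond_iff p)).symm

def e3 : {q : ZMod p × ZMod p × ZMod p × ZMod (p ^ 2) // cond p q} ≃
    ({a : ZMod p // a ≠ 0 ∧ a ≠ 1} × ZMod p × ZMod p ×
      {d : ZMod (p ^ 2) // u p d ≠ 0 ∧ u p d ≠ 1}) where
  toFun q := (⟨q.1.1, q.2.1.1, q.2.2.1⟩, q.1.2.1, q.1.2.2.1, ⟨q.1.2.2.2, q.2.1.2, q.2.2.2⟩)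
  invFun r := ⟨(r.1.1, r.2.1, r.2.2.1, r.2.2.2.1), ⟨r.1.2.1, r.2.2.2.2.1⟩, ⟨r.1.2.2, r.2.2.2.2.2⟩⟩
  left_inv q := rfl
  right_inv r := rfl

noncomputable def ep : {x : ZMod p × ZMod p // x.1 ≠ 0 ∧ x.1 ≠ 1} ≃
    {d : ZMod (p ^ 2) // u p d ≠ 0 ∧ u p d ≠ 1} :=
  Equiv.subtypeEquiv (psi p) (fun x => by rw [u_psi])

def es : {x : ZMod p × ZMod p // x.1 ≠ 0 ∧ x.1 ≠ 1} ≃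
    ({w : ZMod p // w ≠ 0 ∧ w ≠ 1} × ZMod p) where
  toFun q := (⟨q.1.1, q.2⟩, q.1.2)
  invFun r := ⟨(r.1.1, r.2), r.1.2⟩
  left_inv q := rfl
  right_inv r := rfl

theorem main :
    Nat.card {f : AddAut (ZMod p × ZMod (p ^ 2)) //
      Nat.card {g : ZMod p × ZMod (p ^ 2) // f g = g} = 1} =
    p ^ 3 * (p - 2) ^ 2 := by
  have hcard := Nat.card_congr
    ((e1 p).trans ((e2 p).trans ((e3 p).trans
      (Equiv.prodCongr (Equiv.refl _) (Equiv.prodCongr (Equiv.refl _)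
        (Equiv.prodCongr (Equiv.refl _) ((ep p).symm.trans (es p))))))))
  rw [hcard]
  simp only [Nat.card_prod, Nat.card_zmod, card_A]
  ring

end ThetaAux


/-- For a prime `p` and `G = ℤ/p ⊕ ℤ/p²`, the number of automorphisms of `G`
with exactly one fixed point (fixed-point-free automorphisms) is `p³(p-2)²`. -/
theorem theta_one_of_zmod_p_zmod_p_sq (p : ℕ) (hp : p.Prime) :
    Nat.card {f : AddAut (ZMod p × ZMod (p ^ 2)) //
      Nat.card {g : ZMod p × ZMod (p ^ 2) // f g = g} = 1} =
    p ^ 3 * (p - 2) ^ 2 := by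
  haveI := Fact.mk hp
  exact ThetaAux.main p
end

section
/- Let p be a prime and let G = Z_p ⊕ Z_{p²}. The number of automorphisms of G whose set of fixed points has exactly p elements is p(2p³ - 4p² + 1). -/
/-!
Every endomorphism of `G = ℤ/p × ℤ/p²` has the form `(x, y) ↦ (a x + b ȳ, p c x + d y)` with
`a b c ∈ ℤ/p`, `d ∈ ℤ/p²` and `ȳ = y mod p`, i.e. it is given by the matrix `[[a, b], [p c, d]]`,
and distinct matrices give distinct endomorphisms. Solving the two kernel equations gives the
order of the kernel (`1`, `p`, `p²` or `p³`) for every matrix; in particular the map is an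
automorphism iff `a ≠ 0` and `d ≢ 0 (mod p)`. The fixed points of `f` form the kernel of `f - 1`,
whose matrix is `[[a - 1, b], [p c, d - 1]]`. So for fixed `a, b, c` one counts the admissible `d`:
when `a ∉ {0, 1}` they are the `p - 1` elements `d ≡ 1 (mod p)` other than `1 + p (a - 1)⁻¹ b c`;
when `a = 1` the condition only depends on `d mod p`, leaving `(p - 1) p` or `(p - 2) p` of them.
-/

open Finset

theorem AddMonoidHom.card_subtype_comp_of_surjective {M N : Type*} [AddGroup M] [AddGroup N]
    [Finite M] {π : M →+ N} (hπ : Function.Surjective π) (P : N → Prop) :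
    Nat.card {m // P (π m)} = Nat.card {n // P n} * Nat.card π.ker := by
  classical
  have : Finite N := Finite.of_surjective π hπ
  have := Fintype.ofFinite {n // P n}
  rw [← Nat.card_congr (Equiv.sigmaSubtypeFiberEquivSubtype π fun _ => Iff.rfl), Nat.card_sigma]
  have hfiber (n : {n // P n}) : Nat.card {m // π m = n} = Nat.card π.ker :=
    Nat.card_congr (π.fiberEquivKerOfSurjective hπ n)
  simp only [hfiber, sum_const, card_univ, smul_eq_mul, Nat.card_eq_fintype_card]

theorem AddMonoidHom.card_eq_mul_card_ker {M N : Type*} [AddGroup M] [AddGroup N]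
    [Finite M] {π : M →+ N} (hπ : Function.Surjective π) :
    Nat.card M = Nat.card N * Nat.card π.ker := by
  simpa using π.card_subtype_comp_of_surjective hπ (fun _ => True)

theorem AddMonoidHom.card_ker_eq_of_injective {G H K L : Type*} [AddGroup G] [AddGroup H]
    [AddGroup K] [AddGroup L] {f : G →+ K} {ψ : H →+ G} {f' : H →+ L}
    (hψ : Function.Injective ψ) (hrange : f.ker ≤ ψ.range) (hf' : ∀ h, f (ψ h) = 0 ↔ f' h = 0) :
    Nat.card f.ker = Nat.card f'.ker := by
  have hker : f'.ker = f.ker.comap ψ := by ext h; simp [hf']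
  rw [hker]
  exact (Nat.card_preimage_of_injective hψ fun g hg => hrange hg).symm

theorem AddMonoidHom.card_ker_eq_mul_of_surjective {G N K L : Type*} [AddGroup G] [Finite G]
    [AddGroup N] [AddGroup K] [AddGroup L] {f : G →+ K} {π : G →+ N} {f' : N →+ L}
    (hπ : Function.Surjective π) (hf' : ∀ g, f g = 0 ↔ f' (π g) = 0) :
    Nat.card f.ker = Nat.card f'.ker * Nat.card π.ker := by
  rw [← π.card_subtype_comp_of_surjective hπ (· ∈ f'.ker)]
  exact Nat.card_congr (Equiv.subtypeEquivRight fun g => hf' g)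

theorem ZMod.addMonoidHom_prod_ext {m n : ℕ} {A : Type*} [AddCommGroup A]
    {f g : ZMod m × ZMod n →+ A} (h₁ : f (1, 0) = g (1, 0)) (h₂ : f (0, 1) = g (0, 1)) :
    f = g := by
  have hZMod {k : ℕ} {u v : ZMod k →+ A} (h : u 1 = v 1) : u = v := by
    ext x
    obtain ⟨z, rfl⟩ := ZMod.intCast_surjective x
    rw [← zsmul_one, map_zsmul, map_zsmul, h]
  rw [← f.coprod_unique, ← g.coprod_unique]
  exact congrArg₂ _ (hZMod h₁) (hZMod h₂)

theorem card_ker_coprod_mulLeft {K : Type*} [Field K] [Finite K] [DecidableEq K] (C v : K) :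
    Nat.card ((AddMonoidHom.mulLeft C).coprod (AddMonoidHom.mulLeft v)).ker =
      if C = 0 ∧ v = 0 then Nat.card K ^ 2 else Nat.card K := by
  split_ifs with h
  · obtain ⟨rfl, rfl⟩ := h
    simp [sq]
  · have hsurj :
        Function.Surjective ((AddMonoidHom.mulLeft C).coprod (AddMonoidHom.mulLeft v)) := by
      intro z
      by_cases hC : C = 0
      · have hv : v ≠ 0 := fun hv => h ⟨hC, hv⟩
        exact ⟨(0, v⁻¹ * z), by simp [hv]⟩
      · exact ⟨(C⁻¹ * z, 0), by simp [hC]⟩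
    have hcard := AddMonoidHom.card_eq_mul_card_ker hsurj
    rw [Nat.card_prod] at hcard
    exact (Nat.eq_of_mul_eq_mul_left Nat.card_pos hcard).symm

namespace PrimeSq

variable (p : ℕ)

def red : ZMod (p ^ 2) →+* ZMod p := ZMod.castHom (dvd_pow_self p two_ne_zero) (ZMod p)

/-- `pMul p t = p * t̃` for any lift `t̃` of `t`; it identifies `ℤ/p` with `ker (red p)`. -/
def pMul : ZMod p →+ ZMod (p ^ 2) :=
  ZMod.lift p ⟨(AddMonoidHom.mulLeft (p : ZMod (p ^ 2))).comp (Int.castAddHom _), by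
    simp [← sq, ← Nat.cast_pow]⟩

variable {p}

@[simp]
theorem red_intCast (k : ℤ) : red p k = k := by
  simp [red]

@[simp]
theorem pMul_intCast (k : ℤ) : pMul p k = p * k := by
  simp [pMul, ZMod.lift_coe]

@[simp]
theorem red_pMul (t : ZMod p) : red p (pMul p t) = 0 := by
  obtain ⟨k, rfl⟩ := ZMod.intCast_surjective t
  simp

theorem pMul_mul (t : ZMod p) (y : ZMod (p ^ 2)) : pMul p t * y = pMul p (t * red p y) := by
  obtain ⟨k, rfl⟩ := ZMod.intCast_surjective t
  obtain ⟨m, rfl⟩ := ZMod.intCast_surjective y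
  rw [red_intCast, ← Int.cast_mul, pMul_intCast, pMul_intCast]
  push_cast
  ring

theorem red_eq_zero_iff {y : ZMod (p ^ 2)} : red p y = 0 ↔ ∃ t, pMul p t = y := by
  refine ⟨fun h => ?_, fun ⟨t, ht⟩ => ht ▸ red_pMul t⟩
  obtain ⟨k, rfl⟩ := ZMod.intCast_surjective y
  rw [red_intCast, ZMod.intCast_zmod_eq_zero_iff_dvd] at h
  obtain ⟨m, rfl⟩ := h
  exact ⟨m, by simp⟩

variable [Fact p.Prime]

theorem pMul_injective : Function.Injective (pMul p) := by
  rw [injective_iff_map_eq_zero]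
  intro t ht
  obtain ⟨k, rfl⟩ := ZMod.intCast_surjective t
  have hp : (p : ℤ) ≠ 0 := by exact_mod_cast (Fact.out : p.Prime).ne_zero
  rw [pMul_intCast, ← Int.cast_natCast, ← Int.cast_mul, ZMod.intCast_zmod_eq_zero_iff_dvd,
    Nat.cast_pow, sq] at ht
  rw [ZMod.intCast_zmod_eq_zero_iff_dvd]
  exact (mul_dvd_mul_iff_left hp).mp ht

theorem isUnit_iff_red_ne_zero {d : ZMod (p ^ 2)} : IsUnit d ↔ red p d ≠ 0 := by
  rw [← ZMod.natCast_zmod_val d, ZMod.isUnit_natCast_iff_not_dvd_pow Fact.out two_pos,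
    ← ZMod.natCast_eq_zero_iff, ← map_natCast (red p)]

theorem red_eq_zero_of_nsmul_eq_zero {y : ZMod (p ^ 2)} (h : p • y = 0) : red p y = 0 := by
  have hp : pMul p 1 = p := by simpa using pMul_intCast (p := p) 1
  rw [nsmul_eq_mul, ← hp, pMul_mul, one_mul] at h
  exact (map_eq_zero_iff _ pMul_injective).mp h

theorem card_ker_red : Nat.card (red p).toAddMonoidHom.ker = p := by
  have h := (red p).toAddMonoidHom.card_eq_mul_card_ker (ZMod.ringHom_surjective (red p))
  rw [Nat.card_zmod, Nat.card_zmod] at h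
  exact Nat.eq_of_mul_eq_mul_left (Fact.out : p.Prime).pos (h.symm.trans (sq p))

theorem card_filter_red (P : ZMod p → Prop) [DecidablePred P] :
    #{d : ZMod (p ^ 2) | P (red p d)} = #{v | P v} * p := by
  have h := (red p).toAddMonoidHom.card_subtype_comp_of_surjective (ZMod.ringHom_surjective _) P
  rwa [card_ker_red, Nat.card_eq_fintype_card, Nat.card_eq_fintype_card, Fintype.card_subtype,
    Fintype.card_subtype] at h

theorem card_ker_mulLeft (E : ZMod (p ^ 2)) :
    Nat.card (AddMonoidHom.mulLeft E).ker =
      if red p E ≠ 0 then 1 else if E = 0 then p ^ 2 else p := by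
  split_ifs with hE hE0
  · rw [AddSubgroup.card_eq_one, AddMonoidHom.ker_eq_bot_iff]
    exact (isUnit_iff_red_ne_zero.mpr hE).mul_right_injective
  · simp [hE0]
  · obtain ⟨t, rfl⟩ := red_eq_zero_iff.mp (not_not.mp hE)
    have ht : t ≠ 0 := by rintro rfl; exact hE0 (map_zero _)
    have hker : (AddMonoidHom.mulLeft (pMul p t)).ker = (red p).toAddMonoidHom.ker := by
      ext y
      simp [pMul_mul, map_eq_zero_iff _ pMul_injective, ht]
    rw [hker, card_ker_red]

variable (p) in
def endo (a b c : ZMod p) (d : ZMod (p ^ 2)) : ZMod p × ZMod (p ^ 2) →+ ZMod p × ZMod (p ^ 2) :=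
  ((AddMonoidHom.mulLeft a).coprod ((AddMonoidHom.mulLeft b).comp (red p).toAddMonoidHom)).prod
    (((pMul p).comp (AddMonoidHom.mulLeft c)).coprod (AddMonoidHom.mulLeft d))

@[simp]
theorem endo_apply (a b c : ZMod p) (d : ZMod (p ^ 2)) (g : ZMod p × ZMod (p ^ 2)) :
    endo p a b c d g = (a * g.1 + b * red p g.2, pMul p (c * g.1) + d * g.2) :=
  rfl

theorem endo_sub_one_apply (a b c : ZMod p) (d : ZMod (p ^ 2)) (g : ZMod p × ZMod (p ^ 2)) :
    endo p (a - 1) b c (d - 1) g = endo p a b c d g - g := by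
  ext <;> simp <;> ring

theorem endo_injective :
    Function.Injective fun q : ZMod p × ZMod p × ZMod p × ZMod (p ^ 2) =>
      endo p q.1 q.2.1 q.2.2.1 q.2.2.2 := by
  rintro ⟨a, b, c, d⟩ ⟨a', b', c', d'⟩ h
  have h₁ := DFunLike.congr_fun h (1, 0)
  have h₂ := DFunLike.congr_fun h (0, 1)
  simp only [endo_apply, mul_one, mul_zero, add_zero, map_zero, map_one, zero_add,
    Prod.mk.injEq] at h₁ h₂
  simp [h₁.1, pMul_injective h₁.2, h₂]

theorem exists_endo_eq (f : ZMod p × ZMod (p ^ 2) →+ ZMod p × ZMod (p ^ 2)) :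
    ∃ a b c d, endo p a b c d = f := by
  have hp : p • (f (1, 0)).2 = 0 := by
    rw [← Prod.smul_snd, ← map_nsmul, Prod.smul_mk, nsmul_eq_mul, ZMod.natCast_self, mul_one,
      smul_zero, Prod.mk_zero_zero, map_zero, Prod.snd_zero]
  obtain ⟨c, hc⟩ := red_eq_zero_iff.mp (red_eq_zero_of_nsmul_eq_zero hp)
  exact ⟨(f (1, 0)).1, (f (0, 1)).1, c, (f (0, 1)).2,
    ZMod.addMonoidHom_prod_ext (by simp [hc]) (by simp)⟩

theorem card_ker_endo_of_ne_zero {A : ZMod p} (B C : ZMod p) (D : ZMod (p ^ 2)) (hA : A ≠ 0) :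
    Nat.card (endo p A B C D).ker =
      Nat.card (AddMonoidHom.mulLeft (D - pMul p (A⁻¹ * B * C))).ker := by
  let ψ : ZMod (p ^ 2) →+ ZMod p × ZMod (p ^ 2) :=
    ((AddMonoidHom.mulLeft (-(A⁻¹ * B))).comp (red p).toAddMonoidHom).prod (AddMonoidHom.id _)
  refine AddMonoidHom.card_ker_eq_of_injective (ψ := ψ) (fun y y' h => congrArg Prod.snd h) ?_ ?_
  · rintro ⟨x, y⟩ hxy
    simp only [AddMonoidHom.mem_ker, endo_apply, Prod.mk_eq_zero] at hxy
    refine ⟨y, Prod.ext ?_ rfl⟩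
    calc -(A⁻¹ * B) * red p y = A⁻¹ * -(B * red p y) := by ring
      _ = x := by rw [← eq_neg_of_add_eq_zero_left hxy.1, inv_mul_cancel_left₀ hA]
  · intro y
    have h₁ : A * (A⁻¹ * B * red p y) = B * red p y := by field_simp
    have h₂ : pMul p (C * (A⁻¹ * B * red p y)) = pMul p (A⁻¹ * B * C) * y := by
      rw [pMul_mul]
      ring_nf
    simp [ψ, h₁, h₂, sub_mul, neg_add_eq_sub]

theorem card_ker_endo_zero_of_ne_zero {B : ZMod p} (C : ZMod p) (D : ZMod (p ^ 2)) (hB : B ≠ 0) :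
    Nat.card (endo p 0 B C D).ker =
      Nat.card ((AddMonoidHom.mulLeft C).coprod (AddMonoidHom.mulLeft (red p D))).ker := by
  refine AddMonoidHom.card_ker_eq_of_injective (ψ := (AddMonoidHom.id (ZMod p)).prodMap (pMul p))
    (Function.injective_id.prodMap pMul_injective) ?_ ?_
  · rintro ⟨x, y⟩ hxy
    simp only [AddMonoidHom.mem_ker, endo_apply, Prod.mk_eq_zero, zero_mul, zero_add, hB,
      mul_eq_zero, false_or] at hxy
    obtain ⟨s, rfl⟩ := red_eq_zero_iff.mp hxy.1
    exact ⟨(x, s), rfl⟩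
  · rintro ⟨x, s⟩
    have hDs : D * pMul p s = pMul p (red p D * s) := by rw [mul_comm, pMul_mul, mul_comm]
    simp [hDs, ← map_add, map_eq_zero_iff _ pMul_injective]

theorem card_ker_endo_zero_zero_of_isUnit (C : ZMod p) {D : ZMod (p ^ 2)} (hD : IsUnit D) :
    Nat.card (endo p 0 0 C D).ker = p := by
  let ψ : ZMod p →+ ZMod p × ZMod (p ^ 2) := (AddMonoidHom.id _).prod
    ((AddMonoidHom.mulLeft (-D⁻¹)).comp ((pMul p).comp (AddMonoidHom.mulLeft C)))
  rw [AddMonoidHom.card_ker_eq_of_injective (ψ := ψ) (f' := (0 : ZMod p →+ ZMod p))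
    (fun x x' h => congrArg Prod.fst h) ?_ ?_]
  · simp
  · rintro ⟨x, y⟩ hxy
    simp only [AddMonoidHom.mem_ker, endo_apply, Prod.mk_eq_zero] at hxy
    refine ⟨x, Prod.ext rfl ?_⟩
    calc (ψ x).2 = D⁻¹ * -pMul p (C * x) := by simp [ψ]
      _ = y := by
        rw [← eq_neg_of_add_eq_zero_right hxy.2, ← mul_assoc, ZMod.inv_mul_of_unit _ hD, one_mul]
  · intro x
    simp [ψ, ← mul_assoc, ZMod.mul_inv_of_unit _ hD]

theorem card_ker_endo_zero_zero_pMul (C t : ZMod p) :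
    Nat.card (endo p 0 0 C (pMul p t)).ker =
      Nat.card ((AddMonoidHom.mulLeft C).coprod (AddMonoidHom.mulLeft t)).ker * p := by
  let π : ZMod p × ZMod (p ^ 2) →+ ZMod p × ZMod p :=
    (AddMonoidHom.id (ZMod p)).prodMap (red p).toAddMonoidHom
  have hπ : Function.Surjective π :=
    Function.surjective_id.prodMap (ZMod.ringHom_surjective (red p))
  have hker : Nat.card π.ker = p := by
    have h := π.card_eq_mul_card_ker hπ
    simp only [Nat.card_prod, Nat.card_zmod] at h
    have hp := (Fact.out : p.Prime).pos
    exact Nat.eq_of_mul_eq_mul_left (Nat.mul_pos hp hp) (h.symm.trans (by ring))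
  rw [AddMonoidHom.card_ker_eq_mul_of_surjective hπ
    (f' := (AddMonoidHom.mulLeft C).coprod (AddMonoidHom.mulLeft t)) fun g => ?_, hker]
  simp [π, pMul_mul, ← map_add, map_eq_zero_iff _ pMul_injective]

theorem card_ker_endo (A B C : ZMod p) (D : ZMod (p ^ 2)) :
    Nat.card (endo p A B C D).ker =
      if A ≠ 0 then (if red p D ≠ 0 then 1 else if D = pMul p (A⁻¹ * B * C) then p ^ 2 else p)
      else if B ≠ 0 then (if C = 0 ∧ red p D = 0 then p ^ 2 else p)
      else if red p D ≠ 0 then p else if C = 0 ∧ D = 0 then p ^ 3 else p ^ 2 := by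
  by_cases hA : A = 0
  swap
  · rw [card_ker_endo_of_ne_zero B C D hA, card_ker_mulLeft]
    simp [hA, sub_eq_zero]
  subst hA
  by_cases hB : B = 0
  swap
  · rw [card_ker_endo_zero_of_ne_zero C D hB, card_ker_coprod_mulLeft, Nat.card_zmod]
    simp [hB]
  subst hB
  by_cases hD : red p D = 0
  · obtain ⟨t, rfl⟩ := red_eq_zero_iff.mp hD
    rw [card_ker_endo_zero_zero_pMul, card_ker_coprod_mulLeft, Nat.card_zmod]
    simp [map_eq_zero_iff _ pMul_injective, pow_succ]
  · rw [card_ker_endo_zero_zero_of_isUnit C (isUnit_iff_red_ne_zero.mpr hD)]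
    simp [hD]

theorem card_ker_endo_eq_one_iff {A B C : ZMod p} {D : ZMod (p ^ 2)} :
    Nat.card (endo p A B C D).ker = 1 ↔ A ≠ 0 ∧ red p D ≠ 0 := by
  have hp := (Fact.out : p.Prime).one_lt
  rw [card_ker_endo]
  split_ifs <;> simp_all [hp.ne']

theorem card_ker_endo_eq_self_iff {A B C : ZMod p} {D : ZMod (p ^ 2)} :
    Nat.card (endo p A B C D).ker = p ↔
      (A ≠ 0 ∧ red p D = 0 ∧ D ≠ pMul p (A⁻¹ * B * C)) ∨
      (A = 0 ∧ B ≠ 0 ∧ ¬(C = 0 ∧ red p D = 0)) ∨ (A = 0 ∧ B = 0 ∧ red p D ≠ 0) := by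
  have hp := (Fact.out : p.Prime).one_lt
  rw [card_ker_endo]
  split_ifs <;> simp_all [hp.ne, Nat.pow_eq_self_iff]

theorem bijective_endo_iff {a b c : ZMod p} {d : ZMod (p ^ 2)} :
    Function.Bijective (endo p a b c d) ↔ a ≠ 0 ∧ red p d ≠ 0 := by
  rw [← Finite.injective_iff_bijective, ← AddMonoidHom.ker_eq_bot_iff, ← AddSubgroup.card_eq_one,
    card_ker_endo_eq_one_iff]

variable (p) in
noncomputable def endoAddAutEquiv :
    {q : ZMod p × ZMod p × ZMod p × ZMod (p ^ 2) // q.1 ≠ 0 ∧ red p q.2.2.2 ≠ 0} ≃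
      AddAut (ZMod p × ZMod (p ^ 2)) :=
  Equiv.ofBijective
    (fun q => AddEquiv.ofBijective (endo p q.1.1 q.1.2.1 q.1.2.2.1 q.1.2.2.2)
      (bijective_endo_iff.mpr q.2)) <| by
    refine ⟨fun q q' h => Subtype.ext (endo_injective
      (AddMonoidHom.ext fun g => DFunLike.congr_fun h g)), fun f => ?_⟩
    obtain ⟨a, b, c, d, h⟩ := exists_endo_eq f.toAddMonoidHom
    have hf : Function.Bijective (endo p a b c d) := h ▸ f.bijective
    exact ⟨⟨(a, b, c, d), bijective_endo_iff.mp hf⟩, AddEquiv.ext fun g => DFunLike.congr_fun h g⟩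

theorem card_addAut_fixedPoints_eq (n : ℕ) :
    Nat.card {f : AddAut (ZMod p × ZMod (p ^ 2)) // Nat.card {g // f g = g} = n} =
      Nat.card {q : ZMod p × ZMod p × ZMod p × ZMod (p ^ 2) // (q.1 ≠ 0 ∧ red p q.2.2.2 ≠ 0) ∧
        Nat.card (endo p (q.1 - 1) q.2.1 q.2.2.1 (q.2.2.2 - 1)).ker = n} := by
  refine (Nat.card_congr ((endoAddAutEquiv p).subtypeEquiv fun q => ?_).symm).trans
    (Nat.card_congr (Equiv.subtypeSubtypeEquivSubtypeInter _ _))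
  refine Eq.congr_left (Nat.card_congr (Equiv.subtypeEquivRight fun g => ?_))
  rw [AddMonoidHom.mem_ker, endo_sub_one_apply, sub_eq_zero]
  rfl

theorem card_filter_ne_zero : #{v : ZMod p | v ≠ 0} = p - 1 := by
  rw [filter_ne' univ 0, card_erase_of_mem (mem_univ _), card_univ, ZMod.card]

theorem card_filter_ne_zero_ne_one : #{v : ZMod p | v ≠ 0 ∧ v ≠ 1} = p - 2 := by
  have h : ({v | v ≠ 0 ∧ v ≠ 1} : Finset (ZMod p)) = (univ.erase 0).erase 1 := by
    ext v
    simp [and_comm]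
  rw [h, card_erase_of_mem (mem_erase.mpr ⟨one_ne_zero, mem_univ _⟩),
    card_erase_of_mem (mem_univ _), card_univ, ZMod.card, Nat.sub_sub]

theorem card_filter_ker_sub_one_eq_self (a b c : ZMod p) :
    #{d : ZMod (p ^ 2) | (a ≠ 0 ∧ red p d ≠ 0) ∧
        Nat.card (endo p (a - 1) b c (d - 1)).ker = p} =
      if a = 0 then 0
      else if a = 1 then (if b = 0 then (p - 2) * p else if c = 0 then (p - 2) * p else (p - 1) * p)
      else p - 1 := by
  simp_rw [card_ker_endo_eq_self_iff, map_sub, map_one, ne_eq, sub_eq_zero]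
  by_cases ha0 : a = 0
  · simp [ha0]
  by_cases ha1 : a = 1
  · subst ha1
    calc _ = #{d | (fun v => v ≠ 0 ∧ (b ≠ 0 ∧ ¬(c = 0 ∧ v = 1) ∨ b = 0 ∧ v ≠ 1)) (red p d)} := by
          congr 1
          ext d
          simp
      _ = #{v : ZMod p | v ≠ 0 ∧ (b ≠ 0 ∧ ¬(c = 0 ∧ v = 1) ∨ b = 0 ∧ v ≠ 1)} * p :=
          card_filter_red fun v => v ≠ 0 ∧ (b ≠ 0 ∧ ¬(c = 0 ∧ v = 1) ∨ b = 0 ∧ v ≠ 1)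
      _ = _ := by
          by_cases hb : b = 0
          · simp [hb, card_filter_ne_zero_ne_one]
          by_cases hc : c = 0
          · simp [hb, hc, card_filter_ne_zero_ne_one]
          · simp [hb, hc, card_filter_ne_zero]
  · set e := 1 + pMul p ((a - 1)⁻¹ * b * c)
    have he : e ∈ ({d | red p d = 1} : Finset (ZMod (p ^ 2))) := by simp [e]
    calc _ = #(({d | red p d = 1} : Finset (ZMod (p ^ 2))).erase e) := by
          congr 1
          ext d
          by_cases h : red p d = 1 <;> simp [h, ha0, ha1, sub_eq_iff_eq_add', e, and_comm]
      _ = p - 1 := by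
          rw [card_erase_of_mem he, card_filter_red (· = 1), filter_eq' univ 1]
          simp
      _ = _ := by simp [ha0, ha1]

theorem card_ker_sub_one_eq_self :
    Nat.card {q : ZMod p × ZMod p × ZMod p × ZMod (p ^ 2) // (q.1 ≠ 0 ∧ red p q.2.2.2 ≠ 0) ∧
      Nat.card (endo p (q.1 - 1) q.2.1 q.2.2.1 (q.2.2.2 - 1)).ker = p} =
      p * (2 * p ^ 3 - 4 * p ^ 2 + 1) := by
  rw [Nat.card_eq_fintype_card, Fintype.card_subtype, card_filter]
  simp only [Fintype.sum_prod_type]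
  simp only [← card_filter, card_filter_ker_sub_one_eq_self]
  simp only [sum_ite_irrel, sum_const_zero, sum_const, card_univ, ZMod.card, smul_eq_mul, sum_ite,
    filter_eq', mem_univ, ↓reduceIte, card_singleton, one_mul, filter_ne', card_erase_of_mem,
    mem_erase, ne_eq, one_ne_zero, not_false_eq_true, and_self, zero_add]
  have h2 := (Fact.out : p.Prime).two_le
  have h3 : 4 * p ^ 2 ≤ 2 * p ^ 3 := by nlinarith
  zify [h3, h2, (by omega : 1 ≤ p), (by omega : 1 ≤ p - 1)]
  ring

end PrimeSq

/-- For a prime `p` and `G = ℤ/p ⊕ ℤ/p²`, the number of automorphisms of `G`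
with exactly `p` fixed points is `p(2p³ - 4p² + 1)`. -/
theorem theta_p_of_zmod_p_zmod_p_sq (p : ℕ) (hp : p.Prime) :
    Nat.card {f : AddAut (ZMod p × ZMod (p ^ 2)) //
      Nat.card {g : ZMod p × ZMod (p ^ 2) // f g = g} = p} =
    p * (2 * p ^ 3 - 4 * p ^ 2 + 1) := by
  have := Fact.mk hp
  rw [PrimeSq.card_addAut_fixedPoints_eq, PrimeSq.card_ker_sub_one_eq_self]
end

section
/- Let p be a prime and let G = Z_p ⊕ Z_{p²}. The number of automorphisms of G whose set of fixed points has exactly p² elements is p³ - p - 1. -/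
namespace ThetaAux

variable (p : ℕ)

def pihom : ZMod (p^2) →+* ZMod p := ZMod.castHom (dvd_pow_self p two_ne_zero) (ZMod p)

def psihom : ZMod p →+ ZMod (p^2) :=
  ZMod.lift p ⟨zmultiplesHom (ZMod (p^2)) (p : ZMod (p^2)), by
    simp [zmultiplesHom_apply]
    norm_cast
    rw [← pow_two, ZMod.natCast_self]⟩

variable {p}

lemma natmul_p_eq (hp : p.Prime) {m n : ℕ} (h : m ≡ n [MOD p]) :
    ((m * p : ℕ) : ZMod (p^2)) = ((n * p : ℕ) : ZMod (p^2)) := by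
  rw [ZMod.natCast_eq_natCast_iff, pow_two]
  exact Nat.ModEq.mul_right' p h

lemma psihom_apply (hp : p.Prime) (c : ZMod p) : psihom p c = (c.val : ZMod (p^2)) * p := by
  have hne : NeZero p := ⟨hp.pos.ne'⟩
  have h1 : (c : ZMod p) = ((c.val : ℤ) : ZMod p) := by
    push_cast
    rw [ZMod.natCast_val, ZMod.cast_id]
  rw [h1, psihom, ZMod.lift_coe]
  simp [zmultiplesHom_apply]

lemma psihom_eq_zero_iff (hp : p.Prime) (c : ZMod p) : psihom p c = 0 ↔ c = 0 := by
  have hne : NeZero p := ⟨hp.pos.ne'⟩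
  constructor
  · intro h
    rw [psihom_apply hp] at h
    have h2 : ((c.val * p : ℕ) : ZMod (p^2)) = 0 := by push_cast; exact h
    rw [ZMod.natCast_eq_zero_iff, pow_two] at h2
    have hdvd : p ∣ c.val := (mul_dvd_mul_iff_right hp.pos.ne').mp h2
    have h0 : c.val = 0 := Nat.eq_zero_of_dvd_of_lt hdvd c.val_lt
    exact (ZMod.val_eq_zero c).mp h0
  · rintro rfl; simp

lemma psihom_inj (hp : p.Prime) {c c' : ZMod p} (h : psihom p c = psihom p c') : c = c' := by
  have : psihom p (c - c') = 0 := by rw [map_sub, h, sub_self]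
  have := (psihom_eq_zero_iff hp _).mp this
  linear_combination (norm := abel) this

lemma pihom_natCast (k : ℕ) : pihom p (k : ZMod (p^2)) = (k : ZMod p) := map_natCast _ k

lemma pihom_psihom (hp : p.Prime) (c : ZMod p) : pihom p (psihom p c) = 0 := by
  rw [psihom_apply hp]
  have : ((c.val : ℕ) : ZMod (p^2)) * (p : ZMod (p^2)) = ((c.val * p : ℕ) : ZMod (p^2)) := by
    push_cast; ring
  rw [this, pihom_natCast]
  push_cast
  simp

lemma exists_psihom_of_pihom_eq_zero (hp : p.Prime) (z : ZMod (p^2)) (h : pihom p z = 0) :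
    ∃ c : ZMod p, psihom p c = z := by
  have hne : NeZero p := ⟨hp.pos.ne'⟩
  have hne2 : NeZero (p^2) := ⟨pow_ne_zero 2 hp.pos.ne'⟩
  have hz : ((z.val : ℕ) : ZMod (p^2)) = z := by rw [ZMod.natCast_val, ZMod.cast_id]
  have h2 : ((z.val : ℕ) : ZMod p) = 0 := by rw [← pihom_natCast (p := p), hz, h]
  rw [ZMod.natCast_eq_zero_iff] at h2
  obtain ⟨k, hk⟩ := h2
  refine ⟨(k : ZMod p), ?_⟩
  rw [psihom_apply hp, ZMod.val_natCast]
  have key := natmul_p_eq hp (Nat.mod_modEq k p)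
  push_cast at key
  rw [key, ← hz, hk]
  push_cast
  ring

lemma psihom_mul (hp : p.Prime) (u : ZMod p) (z : ZMod (p^2)) :
    psihom p u * z = psihom p (u * pihom p z) := by
  have hne : NeZero p := ⟨hp.pos.ne'⟩
  have hne2 : NeZero (p^2) := ⟨pow_ne_zero 2 hp.pos.ne'⟩
  have hz : ((z.val : ℕ) : ZMod (p^2)) = z := by rw [ZMod.natCast_val, ZMod.cast_id]
  have hpiz : pihom p z = ((z.val : ℕ) : ZMod p) := by
    conv_lhs => rw [← hz]
    rw [pihom_natCast]
  have hu : u = ((u.val : ℕ) : ZMod p) := by rw [ZMod.natCast_val, ZMod.cast_id]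
  have hval : (u * pihom p z).val ≡ u.val * z.val [MOD p] := by
    have h3 : ((u.val * z.val : ℕ) : ZMod p) = u * ((z.val : ℕ) : ZMod p) := by
      rw [Nat.cast_mul]
      conv_rhs => rw [hu]
    rw [hpiz, ← h3, ZMod.val_natCast]
    exact Nat.mod_modEq _ p
  have key := natmul_p_eq hp hval
  push_cast at key
  rw [psihom_apply hp, psihom_apply hp, key]
  conv_lhs => rw [← hz]
  push_cast
  ring

lemma psihom_mul_psihom (hp : p.Prime) (u v : ZMod p) : psihom p u * psihom p v = 0 := by
  rw [psihom_mul hp, pihom_psihom hp, mul_zero, map_zero]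



variable (p : ℕ)

def Emap (a b c : ZMod p) (d : ZMod (p^2)) :
    (ZMod p × ZMod (p^2)) →+ (ZMod p × ZMod (p^2)) :=
  ((AddMonoidHom.mulLeft a).prod ((psihom p).comp (AddMonoidHom.mulLeft c))).coprod
    (((AddMonoidHom.mulLeft b).comp (pihom p).toAddMonoidHom).prod (AddMonoidHom.mulLeft d))

variable {p}

lemma Emap_apply (a b c : ZMod p) (d : ZMod (p^2)) (x : ZMod p) (y : ZMod (p^2)) :
    Emap p a b c d (x, y) = (a * x + b * pihom p y, psihom p (c * x) + d * y) := by
  simp [Emap, AddMonoidHom.coprod_apply, AddMonoidHom.mulLeft, Prod.ext_iff]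

lemma hom_ext_s2 {F G : (ZMod p × ZMod (p^2)) →+ (ZMod p × ZMod (p^2))} (hp : p.Prime)
    (h1 : F (1, 0) = G (1, 0)) (h2 : F (0, 1) = G (0, 1)) : F = G := by
  have hne : NeZero p := ⟨hp.pos.ne'⟩
  have hne2 : NeZero (p^2) := ⟨pow_ne_zero 2 hp.pos.ne'⟩
  apply AddMonoidHom.ext
  rintro ⟨x, y⟩
  have hdec : ((x, y) : ZMod p × ZMod (p^2)) =
      x.val • ((1 : ZMod p), (0 : ZMod (p^2))) + y.val • ((0 : ZMod p), (1 : ZMod (p^2))) := by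
    have : x.val • (1 : ZMod p) = x := by
      rw [nsmul_eq_mul, mul_one, ZMod.natCast_val, ZMod.cast_id]
    have h2' : y.val • (1 : ZMod (p^2)) = y := by
      rw [nsmul_eq_mul, mul_one, ZMod.natCast_val, ZMod.cast_id]
    rw [Prod.smul_mk, Prod.smul_mk, Prod.mk_add_mk, smul_zero, smul_zero, this, h2']
    rw [add_zero, zero_add]
  rw [hdec, map_add, map_add, map_nsmul, map_nsmul, map_nsmul, map_nsmul, h1, h2]

variable (p)

def rho (s t : ZMod p) : ZMod (p^2) := ((s.val + p * t.val : ℕ) : ZMod (p^2))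

def delta (y : ZMod (p^2)) : ZMod p := ((y.val / p : ℕ) : ZMod p)

variable {p}

lemma pihom_rho (hp : p.Prime) (s t : ZMod p) : pihom p (rho p s t) = s := by
  have hne : NeZero p := ⟨hp.pos.ne'⟩
  rw [rho, pihom_natCast]
  push_cast
  simp [ZMod.natCast_val, ZMod.cast_id]

lemma rho_val (hp : p.Prime) (s t : ZMod p) : (rho p s t).val = s.val + p * t.val := by
  have hne : NeZero p := ⟨hp.pos.ne'⟩
  have hne2 : NeZero (p^2) := ⟨pow_ne_zero 2 hp.pos.ne'⟩
  rw [rho, ZMod.val_natCast]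
  apply Nat.mod_eq_of_lt
  have h1 : s.val < p := s.val_lt
  have h2 : t.val < p := t.val_lt
  have h3 : p * (t.val + 1) ≤ p * p := Nat.mul_le_mul_left p h2
  rw [pow_two]
  calc s.val + p * t.val < p + p * t.val := by omega
    _ = p * (t.val + 1) := by ring
    _ ≤ p * p := h3

lemma delta_rho (hp : p.Prime) (s t : ZMod p) : delta p (rho p s t) = t := by
  have hne : NeZero p := ⟨hp.pos.ne'⟩
  rw [delta, rho_val hp]
  have h1 : s.val < p := s.val_lt
  have : (s.val + p * t.val) / p = t.val := by
    rw [Nat.add_mul_div_left _ _ hp.pos, Nat.div_eq_of_lt h1, zero_add]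
  rw [this, ZMod.natCast_val, ZMod.cast_id]

lemma rho_pihom_delta (hp : p.Prime) (y : ZMod (p^2)) :
    rho p (pihom p y) (delta p y) = y := by
  have hne : NeZero p := ⟨hp.pos.ne'⟩
  have hne2 : NeZero (p^2) := ⟨pow_ne_zero 2 hp.pos.ne'⟩
  have hz : ((y.val : ℕ) : ZMod (p^2)) = y := by rw [ZMod.natCast_val, ZMod.cast_id]
  have hpiy : (pihom p y).val = y.val % p := by
    have : pihom p y = ((y.val : ℕ) : ZMod p) := by
      conv_lhs => rw [← hz]
      rw [pihom_natCast]
    rw [this, ZMod.val_natCast]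
  have hdel : (delta p y).val = y.val / p := by
    rw [delta, ZMod.val_natCast]
    apply Nat.mod_eq_of_lt
    rw [Nat.div_lt_iff_lt_mul hp.pos, ← pow_two]
    exact y.val_lt
  rw [rho, hpiy, hdel, Nat.mod_add_div, hz]

lemma card_fiber (hp : p.Prime) (P : ZMod p × ZMod p → Prop) :
    Nat.card {g : ZMod p × ZMod (p^2) // P (g.1, pihom p g.2)} =
      Nat.card {v : ZMod p × ZMod p // P v} * p := by
  have e : {g : ZMod p × ZMod (p^2) // P (g.1, pihom p g.2)} ≃
      {v : ZMod p × ZMod p // P v} × ZMod p :=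
    { toFun := fun g => (⟨(g.1.1, pihom p g.1.2), g.2⟩, delta p g.1.2)
      invFun := fun vt => ⟨(vt.1.1.1, rho p vt.1.1.2 vt.2), by
        simpa [pihom_rho hp] using vt.1.2⟩
      left_inv := fun g => by
        apply Subtype.ext
        exact Prod.ext rfl (rho_pihom_delta hp g.1.2)
      right_inv := fun vt => by
        refine Prod.ext (Subtype.ext (Prod.ext rfl ?_)) ?_
        · exact pihom_rho hp _ _
        · exact delta_rho hp _ _ }
  rw [Nat.card_congr e, Nat.card_prod, Nat.card_zmod]
variable (p)

def Kcond (α b c e : ZMod p) (v : ZMod p × ZMod p) : Prop :=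
  α * v.1 + b * v.2 = 0 ∧ c * v.1 + e * v.2 = 0

variable {p}

lemma card_K_of_det_ne (hp : p.Prime) {α b c e : ZMod p} (h : α * e - b * c ≠ 0) :
    Nat.card {v : ZMod p × ZMod p // Kcond p α b c e v} = 1 := by
  haveI : Fact p.Prime := ⟨hp⟩
  rw [Nat.card_eq_one_iff_unique]
  constructor
  · constructor
    intro v w
    have key : ∀ u : {v : ZMod p × ZMod p // Kcond p α b c e v}, (u : ZMod p × ZMod p) = 0 := by
      rintro ⟨⟨v1, v2⟩, h1, h2⟩
      simp only at h1 h2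
      have e1 : (α * e - b * c) * v1 = 0 := by linear_combination e * h1 - b * h2
      have e2 : (α * e - b * c) * v2 = 0 := by linear_combination α * h2 - c * h1
      have : v1 = 0 := by
        rcases mul_eq_zero.mp e1 with h' | h'
        · exact absurd h' h
        · exact h'
      have : v2 = 0 := by
        rcases mul_eq_zero.mp e2 with h' | h'
        · exact absurd h' h
        · assumption
      simp_all
    exact Subtype.ext ((key v).trans (key w).symm)
  · exact ⟨⟨0, by constructor <;> simp [Kcond]⟩⟩

lemma card_K_row (hp : p.Prime) {α b c e : ZMod p} (hrow : ¬(α = 0 ∧ b = 0))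
    (hdet : α * e = b * c) :
    Nat.card {v : ZMod p × ZMod p // Kcond p α b c e v} = p := by
  haveI : Fact p.Prime := ⟨hp⟩
  by_cases hα : α = 0
  · have hb : b ≠ 0 := fun hb => hrow ⟨hα, hb⟩
    have eqv : {v : ZMod p × ZMod p // Kcond p α b c e v} ≃ ZMod p :=
      { toFun := fun v => v.1.1
        invFun := fun x => ⟨(x, -(b⁻¹ * α * x)), by
          constructor
          · field_simp
            ring
          · have hx : b * (c * x + e * -(b⁻¹ * α * x)) = 0 := by
              field_simp
              linear_combination -x * hdet
            exact (mul_eq_zero.mp hx).resolve_left hb⟩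
        left_inv := fun v => by
          apply Subtype.ext
          refine Prod.ext rfl ?_
          have h1 := v.2.1
          simp only [Kcond] at h1
          field_simp
          linear_combination -h1
        right_inv := fun x => rfl }
    rw [Nat.card_congr eqv, Nat.card_zmod]
  · have eqv : {v : ZMod p × ZMod p // Kcond p α b c e v} ≃ ZMod p :=
      { toFun := fun v => v.1.2
        invFun := fun s => ⟨(-(α⁻¹ * b * s), s), by
          constructor
          · field_simp
            ring
          · have hx : α * (c * -(α⁻¹ * b * s) + e * s) = 0 := by
              field_simp
              linear_combination s * hdet
            exact (mul_eq_zero.mp hx).resolve_left hα⟩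
        left_inv := fun v => by
          apply Subtype.ext
          refine Prod.ext ?_ rfl
          have h1 := v.2.1
          simp only [Kcond] at h1
          field_simp
          linear_combination -h1
        right_inv := fun s => rfl }
    rw [Nat.card_congr eqv, Nat.card_zmod]

lemma card_K_swap (α b c e : ZMod p) :
    Nat.card {v : ZMod p × ZMod p // Kcond p α b c e v} =
      Nat.card {v : ZMod p × ZMod p // Kcond p c e α b v} :=
  Nat.card_congr (Equiv.subtypeEquivRight (fun v => and_comm))

lemma card_K_of_rank_one (hp : p.Prime) {α b c e : ZMod p}
    (hM : ¬(α = 0 ∧ b = 0 ∧ c = 0 ∧ e = 0)) (hdet : α * e = b * c) :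
    Nat.card {v : ZMod p × ZMod p // Kcond p α b c e v} = p := by
  by_cases h : α = 0 ∧ b = 0
  · rw [card_K_swap]
    refine card_K_row hp ?_ ?_
    · rintro ⟨hc, he⟩; exact hM ⟨h.1, h.2, hc, he⟩
    · rw [h.1, h.2]; ring
  · exact card_K_row hp h hdet

lemma card_K_of_zero (hp : p.Prime) :
    Nat.card {v : ZMod p × ZMod p // Kcond p 0 0 0 0 v} = p^2 := by
  have eqv : {v : ZMod p × ZMod p // Kcond p 0 0 0 0 v} ≃ ZMod p × ZMod p :=
    Equiv.subtypeUnivEquiv (by intro v; constructor <;> simp [Kcond])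
  rw [Nat.card_congr eqv, Nat.card_prod, Nat.card_zmod, pow_two]

lemma card_K_eq_p_iff (hp : p.Prime) {α b c e : ZMod p} :
    Nat.card {v : ZMod p × ZMod p // Kcond p α b c e v} = p ↔
      (α * e = b * c ∧ ¬(α = 0 ∧ b = 0 ∧ c = 0 ∧ e = 0)) := by
  constructor
  · intro h
    by_cases hdet : α * e = b * c
    · refine ⟨hdet, ?_⟩
      rintro ⟨rfl, rfl, rfl, rfl⟩
      rw [card_K_of_zero hp] at h
      have := hp.one_lt
      nlinarith [h]
    · have h1 := card_K_of_det_ne hp (sub_ne_zero_of_ne hdet)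
      rw [h1] at h
      have := hp.one_lt
      omega
  · rintro ⟨hdet, hM⟩
    exact card_K_of_rank_one hp hM hdet
lemma Emap_fixed_iff (hp : p.Prime) (a b c e : ZMod p) (x : ZMod p) (y : ZMod (p^2)) :
    Emap p a b c (1 + psihom p e) (x, y) = (x, y) ↔
      Kcond p (a - 1) b c e (x, pihom p y) := by
  rw [Emap_apply, Prod.mk.injEq, Kcond]
  have key : psihom p (c * x) + (1 + psihom p e) * y - y = psihom p (c * x + e * pihom p y) := by
    rw [map_add, ← psihom_mul hp e y]
    ring
  constructor
  · rintro ⟨h1, h2⟩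
    refine ⟨by linear_combination h1, ?_⟩
    have h3 : psihom p (c * x + e * pihom p y) = 0 := by
      rw [← key, h2, sub_self]
    exact (psihom_eq_zero_iff hp _).mp h3
  · rintro ⟨h1, h2⟩
    refine ⟨by linear_combination h1, ?_⟩
    have h3 : psihom p (c * x + e * pihom p y) = 0 := by rw [h2, map_zero]
    rw [h3] at key
    linear_combination key

lemma card_fixed (hp : p.Prime) (a b c e : ZMod p) :
    Nat.card {g : ZMod p × ZMod (p^2) // Emap p a b c (1 + psihom p e) g = g} =
      Nat.card {v : ZMod p × ZMod p // Kcond p (a - 1) b c e v} * p := by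
  rw [← card_fiber hp (Kcond p (a - 1) b c e)]
  apply Nat.card_congr
  apply Equiv.subtypeEquivRight
  rintro ⟨x, y⟩
  exact Emap_fixed_iff hp a b c e x y

lemma Emap_one_zero (hp : p.Prime) (a b c : ZMod p) (d : ZMod (p^2)) :
    Emap p a b c d (1, 0) = (a, psihom p c) := by
  rw [Emap_apply]
  simp

lemma Emap_zero_one (hp : p.Prime) (a b c : ZMod p) (d : ZMod (p^2)) :
    Emap p a b c d (0, 1) = (b, d) := by
  rw [Emap_apply]
  have : pihom p 1 = 1 := map_one _
  simp [this]

lemma Emap_injective (hp : p.Prime) {a b c e : ZMod p} (ha : a ≠ 0) :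
    Function.Injective (Emap p a b c (1 + psihom p e)) := by
  haveI : Fact p.Prime := ⟨hp⟩
  intro g g' hgg
  have h0 : Emap p a b c (1 + psihom p e) (g - g') = 0 := by rw [map_sub, hgg, sub_self]
  rw [← sub_eq_zero]
  revert h0
  generalize g - g' = w
  rcases w with ⟨x, y⟩
  intro h0
  rw [Emap_apply, Prod.ext_iff] at h0
  simp only [Prod.fst_zero, Prod.snd_zero] at h0
  obtain ⟨h1, h2⟩ := h0
  have h2' : y = -(psihom p (c * x) + psihom p e * y) := by linear_combination h2
  have hy : pihom p y = 0 := by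
    rw [h2', map_neg, map_add, pihom_psihom hp, map_mul, pihom_psihom hp, zero_mul, add_zero,
      neg_zero]
  have hx : x = 0 := by
    have : a * x = 0 := by linear_combination h1 - b * hy
    exact (mul_eq_zero.mp this).resolve_left ha
  have hy0 : y = 0 := by
    rw [h2', psihom_mul hp e y, hy, mul_zero, map_zero, hx, mul_zero, map_zero, zero_add, neg_zero]
  rw [hx, hy0]
  rfl

lemma isUnit_of_pihom_ne_zero (hp : p.Prime) {z : ZMod (p^2)} (h : pihom p z ≠ 0) :
    IsUnit z := by
  have hne : NeZero p := ⟨hp.pos.ne'⟩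
  have hne2 : NeZero (p^2) := ⟨pow_ne_zero 2 hp.pos.ne'⟩
  have hz : ((z.val : ℕ) : ZMod (p^2)) = z := by rw [ZMod.natCast_val, ZMod.cast_id]
  rw [← hz]
  rw [ZMod.isUnit_iff_coprime]
  have hndvd : ¬ p ∣ z.val := by
    intro hdvd
    apply h
    have : ((z.val : ℕ) : ZMod p) = 0 := (ZMod.natCast_eq_zero_iff _ _).mpr hdvd
    calc pihom p z = pihom p ((z.val : ℕ) : ZMod (p^2)) := by rw [hz]
      _ = ((z.val : ℕ) : ZMod p) := pihom_natCast _
      _ = 0 := this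
  exact Nat.Coprime.pow_right 2 (Nat.Coprime.symm (hp.coprime_iff_not_dvd.mpr hndvd))
noncomputable def EAut (hp : p.Prime) (a b c e : ZMod p) (ha : a ≠ 0) :
    AddAut (ZMod p × ZMod (p^2)) :=
  haveI : NeZero p := ⟨hp.pos.ne'⟩
  haveI : NeZero (p^2) := ⟨pow_ne_zero 2 hp.pos.ne'⟩
  AddEquiv.ofBijective (Emap p a b c (1 + psihom p e))
    (Finite.injective_iff_bijective.mp (Emap_injective hp ha))

lemma EAut_apply (hp : p.Prime) (a b c e : ZMod p) (ha : a ≠ 0) (g : ZMod p × ZMod (p^2)) :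
    EAut hp a b c e ha g = Emap p a b c (1 + psihom p e) g := rfl

lemma add_one_ne_zero {α : ZMod p} (hα : α ≠ -1) : α + 1 ≠ 0 :=
  fun h => hα (by linear_combination h)

lemma card_fixed_EAut (hp : p.Prime) {α b c e : ZMod p} (hα : α ≠ -1)
    (hdet : α * e = b * c) (hnz : ¬(α = 0 ∧ b = 0 ∧ c = 0 ∧ e = 0)) :
    Nat.card {g : ZMod p × ZMod (p^2) // EAut hp (α + 1) b c e (add_one_ne_zero hα) g = g} =
      p^2 := by
  have hiff : ∀ g : ZMod p × ZMod (p^2),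
      (EAut hp (α + 1) b c e (add_one_ne_zero hα) g = g) ↔
        Emap p (α + 1) b c (1 + psihom p e) g = g := fun g => Iff.rfl
  rw [Nat.card_congr (Equiv.subtypeEquivRight hiff), card_fixed hp]
  have h1 : α + 1 - 1 = α := by ring
  rw [h1, card_K_of_rank_one hp hnz hdet, pow_two]

lemma fixed_cond {a b c : ZMod p} {d : ZMod (p^2)} {g : ZMod p × ZMod (p^2)}
    (hg : Emap p a b c d g = g) :
    a * g.1 + b * pihom p g.2 = g.1 ∧ psihom p (c * g.1) + d * g.2 = g.2 := by
  obtain ⟨x, y⟩ := g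
  rw [Emap_apply, Prod.mk.injEq] at hg
  exact hg

lemma card_fixed_ne_sq_of_unit (hp : p.Prime) {a b c : ZMod p} {d : ZMod (p^2)}
    (hud : pihom p (d - 1) ≠ 0) :
    Nat.card {g : ZMod p × ZMod (p^2) // Emap p a b c d g = g} ≠ p^2 := by
  haveI : Fact p.Prime := ⟨hp⟩
  have hu : IsUnit (d - 1) := isUnit_of_pihom_ne_zero hp hud
  have e1 : {g : ZMod p × ZMod (p^2) // Emap p a b c d g = g} ≃
      {x : ZMod p // (a - 1) * x = 0} :=
    { toFun := fun g => ⟨g.1.1, by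
        obtain ⟨hg1, hg2⟩ := fixed_cond g.2
        have hd : (d - 1) * g.1.2 = -(psihom p (c * g.1.1)) := by linear_combination hg2
        have hpi := congrArg (pihom p) hd
        rw [map_mul, map_neg, pihom_psihom hp, neg_zero] at hpi
        have hy : pihom p g.1.2 = 0 := (mul_eq_zero.mp hpi).resolve_left hud
        linear_combination hg1 - b * hy⟩
      invFun := fun x => ⟨(x.1, (hu.unit⁻¹ : _) * -(psihom p (c * x.1))), by
        have hinv : (d - 1) * ((hu.unit⁻¹ : _) * -(psihom p (c * x.1))) =
            -(psihom p (c * x.1)) := by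
          have hcan := Units.mul_inv_cancel_left hu.unit (-(psihom p (c * x.1)))
          rw [hu.unit_spec] at hcan
          exact hcan
        have hpy : pihom p ((hu.unit⁻¹ : _) * -(psihom p (c * x.1))) = 0 := by
          rw [map_mul, map_neg, pihom_psihom hp, neg_zero, mul_zero]
        rw [Emap_apply, Prod.mk.injEq]
        constructor
        · rw [hpy]
          linear_combination x.2
        · linear_combination hinv⟩
      left_inv := fun g => by
        apply Subtype.ext
        refine Prod.ext rfl ?_
        simp only
        obtain ⟨hg1, hg2⟩ := fixed_cond g.2
        apply hu.mul_left_cancel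
        have hcan := Units.mul_inv_cancel_left hu.unit (-(psihom p (c * g.1.1)))
        rw [hu.unit_spec] at hcan
        rw [hcan]
        linear_combination -hg2
      right_inv := fun x => Subtype.ext rfl }
  rw [Nat.card_congr e1]
  by_cases ha : a = 1
  · have hall : ∀ x : ZMod p, (a - 1) * x = 0 := fun x => by rw [ha]; ring
    rw [Nat.card_congr (Equiv.subtypeUnivEquiv hall), Nat.card_zmod]
    have := hp.one_lt
    intro h
    nlinarith [h]
  · have hsub : (a - 1) ≠ 0 := sub_ne_zero_of_ne ha
    have : Nat.card {x : ZMod p // (a - 1) * x = 0} = 1 := by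
      rw [Nat.card_eq_one_iff_unique]
      refine ⟨⟨fun x y => Subtype.ext ?_⟩, ⟨⟨0, by ring⟩⟩⟩
      have hx := (mul_eq_zero.mp x.2).resolve_left hsub
      have hy := (mul_eq_zero.mp y.2).resolve_left hsub
      rw [hx, hy]
    rw [this]
    have := hp.one_lt
    intro h
    nlinarith [h]
lemma dvd_of_sq_dvd_mul (hp : p ≠ 0) {m : ℕ} (h : p^2 ∣ p * m) : p ∣ m := by
  rw [pow_two] at h
  exact (mul_dvd_mul_iff_left hp).mp h

lemma pihom_eq_zero_of_p_smul (hp : p.Prime) {z : ZMod (p^2)} (hz : p • z = 0) :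
    pihom p z = 0 := by
  haveI : NeZero p := ⟨hp.pos.ne'⟩
  haveI : NeZero (p^2) := ⟨pow_ne_zero 2 hp.pos.ne'⟩
  have hzz : ((z.val : ℕ) : ZMod (p^2)) = z := by rw [ZMod.natCast_val, ZMod.cast_id]
  have h1 : ((p * z.val : ℕ) : ZMod (p^2)) = 0 := by
    push_cast
    rw [hzz, ← nsmul_eq_mul, hz]
  rw [ZMod.natCast_eq_zero_iff] at h1
  have h2 : p ∣ z.val := dvd_of_sq_dvd_mul hp.pos.ne' h1
  have : pihom p z = ((z.val : ℕ) : ZMod p) := by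
    conv_lhs => rw [← hzz]
    rw [pihom_natCast]
  rw [this]
  exact (ZMod.natCast_eq_zero_iff _ _).mpr h2

noncomputable def theta (hp : p.Prime)
    (q : {q : ZMod p × ZMod p × ZMod p × ZMod p //
      q.1 ≠ -1 ∧ q.1 * q.2.2.2 = q.2.1 * q.2.2.1 ∧
        ¬(q.1 = 0 ∧ q.2.1 = 0 ∧ q.2.2.1 = 0 ∧ q.2.2.2 = 0)}) :
    {f : AddAut (ZMod p × ZMod (p ^ 2)) //
      Nat.card {g : ZMod p × ZMod (p ^ 2) // f g = g} = p ^ 2} :=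
  ⟨EAut hp (q.1.1 + 1) q.1.2.1 q.1.2.2.1 q.1.2.2.2 (add_one_ne_zero q.2.1),
    card_fixed_EAut hp q.2.1 q.2.2.1 q.2.2.2⟩

lemma theta_injective (hp : p.Prime) : Function.Injective (theta hp) := by
  intro q q' h
  have hval := congrArg Subtype.val h
  have hfun : ∀ g, Emap p (q.1.1 + 1) q.1.2.1 q.1.2.2.1 (1 + psihom p q.1.2.2.2) g =
      Emap p (q'.1.1 + 1) q'.1.2.1 q'.1.2.2.1 (1 + psihom p q'.1.2.2.2) g := by
    intro g
    exact DFunLike.congr_fun hval g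
  have h10 := hfun (1, 0)
  have h01 := hfun (0, 1)
  rw [Emap_one_zero hp, Emap_one_zero hp, Prod.mk.injEq] at h10
  rw [Emap_zero_one hp, Emap_zero_one hp, Prod.mk.injEq] at h01
  apply Subtype.ext
  obtain ⟨h1, h2⟩ := h10
  obtain ⟨h3, h4⟩ := h01
  have hα : q.1.1 = q'.1.1 := by linear_combination h1
  have hc : q.1.2.2.1 = q'.1.2.2.1 := psihom_inj hp h2
  have he : q.1.2.2.2 = q'.1.2.2.2 := by
    apply psihom_inj hp
    linear_combination h4
  exact Prod.ext hα (Prod.ext h3 (Prod.ext hc he))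

lemma theta_surjective (hp : p.Prime) : Function.Surjective (theta hp) := by
  haveI : Fact p.Prime := ⟨hp⟩
  haveI : NeZero p := ⟨hp.pos.ne'⟩
  haveI : NeZero (p^2) := ⟨pow_ne_zero 2 hp.pos.ne'⟩
  rintro ⟨f, hf⟩
  set a : ZMod p := (f (1, 0)).1 with ha_def
  set w : ZMod (p^2) := (f (1, 0)).2 with hw_def
  set b : ZMod p := (f (0, 1)).1 with hb_def
  set d : ZMod (p^2) := (f (0, 1)).2 with hd_def
  have hps : p • ((1 : ZMod p), (0 : ZMod (p^2))) = (0 : ZMod p × ZMod (p^2)) := by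
    refine Prod.ext ?_ ?_
    · show p • (1 : ZMod p) = 0
      rw [nsmul_eq_mul, mul_one, ZMod.natCast_self]
    · show p • (0 : ZMod (p^2)) = 0
      rw [smul_zero]
  have hpw : p • w = 0 := by
    have h1 : f (p • ((1 : ZMod p), (0 : ZMod (p^2)))) = p • f (1, 0) := map_nsmul f _ _
    rw [hps, map_zero] at h1
    have := congrArg Prod.snd h1
    simpa using this.symm
  obtain ⟨c, hc⟩ := exists_psihom_of_pihom_eq_zero hp w (pihom_eq_zero_of_p_smul hp hpw)
  have hext : (f : AddAut (ZMod p × ZMod (p^2))).toAddMonoidHom = Emap p a b c d := by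
    apply hom_ext_s2 hp
    · rw [Emap_one_zero hp, hc]
      exact Prod.mk.eta.symm
    · rw [Emap_zero_one hp]
      exact Prod.mk.eta.symm
  have hfe : ∀ g, f g = Emap p a b c d g := fun g => DFunLike.congr_fun hext g
  by_cases hud : pihom p (d - 1) = 0
  · obtain ⟨e, he⟩ := exists_psihom_of_pihom_eq_zero hp _ hud
    have hd1 : d = 1 + psihom p e := by linear_combination -he
    have hcard : Nat.card {v : ZMod p × ZMod p // Kcond p (a - 1) b c e v} * p = p^2 := by
      rw [← card_fixed hp a b c e]
      refine Eq.trans (Nat.card_congr (Equiv.subtypeEquivRight (fun g => ?_))) hf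
      rw [hfe g, hd1]
    have hK : Nat.card {v : ZMod p × ZMod p // Kcond p (a - 1) b c e v} = p := by
      apply Nat.eq_of_mul_eq_mul_right hp.pos
      rw [hcard, pow_two]
    obtain ⟨hdet, hnz⟩ := (card_K_eq_p_iff hp).mp hK
    have ha0 : a ≠ 0 := by
      intro h0
      have hzero : f (1, -(psihom p c)) = 0 := by
        rw [hfe, Emap_apply, h0]
        refine Prod.ext ?_ ?_
        · show 0 * 1 + b * pihom p (-(psihom p c)) = 0
          rw [map_neg, pihom_psihom hp, neg_zero, mul_zero, zero_mul, add_zero]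
        · show psihom p (c * 1) + d * -(psihom p c) = 0
          rw [hd1, mul_one]
          have : (1 + psihom p e) * -(psihom p c) =
              -(psihom p c) - psihom p e * psihom p c := by ring
          rw [this, psihom_mul_psihom hp]
          ring
      have h00 : f (1, -(psihom p c)) = f 0 := by rw [hzero, map_zero]
      have := f.injective h00
      have h1 := congrArg Prod.fst this
      simp at h1
    have hα1 : a - 1 ≠ -1 := fun h => ha0 (by linear_combination h)
    refine ⟨⟨(a - 1, b, c, e), hα1, hdet, hnz⟩, ?_⟩
    apply Subtype.ext
    apply DFunLike.ext
    intro g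
    show Emap p (a - 1 + 1) b c (1 + psihom p e) g = f g
    have h2 : a - 1 + 1 = a := by ring
    rw [h2, ← hd1, hfe g]
  · exfalso
    apply card_fixed_ne_sq_of_unit hp hud
    refine Eq.trans (Nat.card_congr (Equiv.subtypeEquivRight (fun g => ?_))) hf
    rw [hfe g]

lemma main_card_eq (hp : p.Prime) :
    Nat.card {f : AddAut (ZMod p × ZMod (p ^ 2)) //
      Nat.card {g : ZMod p × ZMod (p ^ 2) // f g = g} = p ^ 2} =
    Nat.card {q : ZMod p × ZMod p × ZMod p × ZMod p //
      q.1 ≠ -1 ∧ q.1 * q.2.2.2 = q.2.1 * q.2.2.1 ∧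
        ¬(q.1 = 0 ∧ q.2.1 = 0 ∧ q.2.2.1 = 0 ∧ q.2.2.2 = 0)} :=
  (Nat.card_eq_of_bijective (theta hp) ⟨theta_injective hp, theta_surjective hp⟩).symm
section Counting

variable (p : ℕ) [hpf : Fact p.Prime]

def Xtype : Type :=
  ({a : ZMod p // a ≠ 0 ∧ a ≠ -1} × (ZMod p × ZMod p)) ⊕
    (({b : ZMod p // b ≠ 0} × ZMod p) ⊕ {ce : ZMod p × ZMod p // ¬(ce.1 = 0 ∧ ce.2 = 0)})

lemma zero_ne_neg_one : (0 : ZMod p) ≠ -1 := by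
  haveI : NeZero p := ⟨hpf.out.pos.ne'⟩
  intro h
  have : (1 : ZMod p) = 0 := by linear_combination h
  exact one_ne_zero this

def xi : Xtype p → {q : ZMod p × ZMod p × ZMod p × ZMod p //
      q.1 ≠ -1 ∧ q.1 * q.2.2.2 = q.2.1 * q.2.2.1 ∧
        ¬(q.1 = 0 ∧ q.2.1 = 0 ∧ q.2.2.1 = 0 ∧ q.2.2.2 = 0)} := fun x =>
  match x with
  | Sum.inl (⟨α, hα⟩, (b, c)) =>
      ⟨(α, b, c, α⁻¹ * (b * c)), hα.2, by
        simp only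
        rw [← mul_assoc, mul_inv_cancel₀ hα.1, one_mul], fun h => hα.1 h.1⟩
  | Sum.inr (Sum.inl (⟨b, hb⟩, e)) =>
      ⟨(0, b, 0, e), zero_ne_neg_one p, by
        simp only
        ring, fun h => hb h.2.1⟩
  | Sum.inr (Sum.inr ⟨(c, e), h⟩) =>
      ⟨(0, 0, c, e), zero_ne_neg_one p, by
        simp only
        ring, fun hh => h ⟨hh.2.2.1, hh.2.2.2⟩⟩

lemma xi_injective : Function.Injective (xi p) := by
  rintro (⟨⟨α, hα⟩, ⟨b, c⟩⟩ | (⟨⟨b, hb⟩, e⟩ | ⟨⟨c, e⟩, h⟩))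
    (⟨⟨α', hα'⟩, ⟨b', c'⟩⟩ | (⟨⟨b', hb'⟩, e'⟩ | ⟨⟨c', e'⟩, h'⟩)) heq <;>
    simp only [xi, Subtype.mk.injEq, Prod.mk.injEq] at heq
  · obtain ⟨h1, h2, h3, _⟩ := heq
    subst h1; subst h2; subst h3; rfl
  · exact absurd heq.1 hα.1
  · exact absurd heq.1 hα.1
  · exact absurd heq.1.symm hα'.1
  · obtain ⟨_, h2, _, h4⟩ := heq
    subst h2; subst h4; rfl
  · exact absurd heq.2.1 hb
  · exact absurd heq.1.symm hα'.1
  · exact absurd heq.2.1.symm hb'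
  · obtain ⟨_, _, h3, h4⟩ := heq
    subst h3; subst h4; rfl

lemma xi_surjective : Function.Surjective (xi p) := by
  rintro ⟨⟨α, b, c, e⟩, hα, hdet, hnz⟩
  simp only at hα hdet hnz
  by_cases h0 : α = 0
  · subst h0
    by_cases hb : b = 0
    · subst hb
      exact ⟨Sum.inr (Sum.inr ⟨(c, e), fun hh => hnz ⟨rfl, rfl, hh.1, hh.2⟩⟩), Subtype.ext rfl⟩
    · have hc : c = 0 := by
        have hbc : b * c = 0 := by linear_combination -hdet
        exact (mul_eq_zero.mp hbc).resolve_left hb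
      subst hc
      exact ⟨Sum.inr (Sum.inl (⟨b, hb⟩, e)), Subtype.ext rfl⟩
  · refine ⟨Sum.inl (⟨α, h0, hα⟩, (b, c)), Subtype.ext ?_⟩
    simp only [xi]
    have he : α⁻¹ * (b * c) = e := by
      field_simp
      linear_combination -hdet
    rw [he]

lemma card_a_subtype : Nat.card {a : ZMod p // a ≠ 0 ∧ a ≠ -1} = p - 2 := by
  haveI : NeZero p := ⟨hpf.out.pos.ne'⟩
  rw [Nat.card_eq_fintype_card, Fintype.card_subtype]
  have hfil : Finset.filter (fun a : ZMod p => a ≠ 0 ∧ a ≠ -1) Finset.univ =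
      Finset.univ \ {0, -1} := by
    ext a
    simp [not_or]
  rw [hfil, Finset.card_sdiff_of_subset (Finset.subset_univ _), Finset.card_univ, ZMod.card]
  congr 1
  rw [Finset.card_insert_of_notMem, Finset.card_singleton]
  simp only [Finset.mem_singleton]
  exact zero_ne_neg_one p

lemma card_b_subtype : Nat.card {b : ZMod p // b ≠ 0} = p - 1 := by
  haveI : NeZero p := ⟨hpf.out.pos.ne'⟩
  rw [Nat.card_eq_fintype_card, Fintype.card_subtype_compl, ZMod.card,
    Fintype.card_subtype_eq]

lemma card_ce_subtype : Nat.card {ce : ZMod p × ZMod p // ¬(ce.1 = 0 ∧ ce.2 = 0)} = p * p - 1 := by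
  haveI : NeZero p := ⟨hpf.out.pos.ne'⟩
  have h1 : ∀ ce : ZMod p × ZMod p, (¬(ce.1 = 0 ∧ ce.2 = 0)) ↔ ¬(ce = 0) := by
    intro ce
    rw [Prod.ext_iff]
    rfl
  rw [Nat.card_congr (Equiv.subtypeEquivRight h1), Nat.card_eq_fintype_card,
    Fintype.card_subtype_compl, Fintype.card_prod, ZMod.card, Fintype.card_subtype_eq]

lemma card_Xtype : Nat.card (Xtype p) = (p - 2) * (p * p) + ((p - 1) * p + (p * p - 1)) := by
  haveI : NeZero p := ⟨hpf.out.pos.ne'⟩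
  rw [Xtype, Nat.card_sum, Nat.card_sum, Nat.card_prod, Nat.card_prod, Nat.card_prod,
    Nat.card_zmod, card_a_subtype p, card_b_subtype p, card_ce_subtype p]

end Counting

lemma arith_final {p : ℕ} (hp : p.Prime) :
    (p - 2) * (p * p) + ((p - 1) * p + (p * p - 1)) = p^3 - p - 1 := by
  have h2 : 2 ≤ p := hp.two_le
  have h1 : 1 ≤ p := le_trans one_le_two h2
  have hpp : 1 ≤ p * p := Nat.one_le_iff_ne_zero.mpr (by positivity)
  have hle : p ≤ p^3 := Nat.le_self_pow (by norm_num) p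
  have hle1 : 1 ≤ p^3 - p := by
    have : p + 1 ≤ p^3 := by nlinarith
    omega
  zify [h2, h1, hpp, hle, hle1]
  ring

lemma card_param (hp : p.Prime) :
    Nat.card {q : ZMod p × ZMod p × ZMod p × ZMod p //
      q.1 ≠ -1 ∧ q.1 * q.2.2.2 = q.2.1 * q.2.2.1 ∧
        ¬(q.1 = 0 ∧ q.2.1 = 0 ∧ q.2.2.1 = 0 ∧ q.2.2.2 = 0)} = p^3 - p - 1 := by
  haveI : Fact p.Prime := ⟨hp⟩
  rw [← Nat.card_eq_of_bijective (xi p) ⟨xi_injective p, xi_surjective p⟩, card_Xtype,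
    arith_final hp]
end ThetaAux

/-- For a prime `p` and `G = ℤ/p ⊕ ℤ/p²`, the number of automorphisms of `G`
with exactly `p²` fixed points is `p³ - p - 1`. -/
theorem theta_p_sq_of_zmod_p_zmod_p_sq (p : ℕ) (hp : p.Prime) :
    Nat.card {f : AddAut (ZMod p × ZMod (p ^ 2)) //
      Nat.card {g : ZMod p × ZMod (p ^ 2) // f g = g} = p ^ 2} =
    p ^ 3 - p - 1 := by
  rw [ThetaAux.main_card_eq hp, ThetaAux.card_param hp]
end

section
/- Let p be a prime and let a and b be positive integers with a < b. The number of fixed-point-free automorphisms of the group Z_{p^a} ⊕ Z_{p^b} is p^{3a+b-2}(p-2)². -/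
/-!
An endomorphism of `ℤ/p^a × ℤ/p^b` is a matrix `(α β; γ δ)` whose lower left entry acts as
`x ↦ p^(b-a) γ x`; since `a < b`, the off-diagonal entries only contribute nilpotents, so the
endomorphism is bijective iff `α` and `δ` are units. An automorphism `f` is fixed-point-free iff
`f - 1` is injective, and `f - 1` has matrix `(α-1 β; γ δ-1)`. Hence fixed-point-free
automorphisms correspond to `α, α - 1` units in `ℤ/p^a` (`p^(a-1)(p-2)` choices), `δ, δ - 1`
units in `ℤ/p^b` (`p^(b-1)(p-2)` choices) and arbitrary `β, γ ∈ ℤ/p^a`.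
-/

open Function

theorem AddMonoidHom.injective_sub_id_iff {G : Type*} [AddCommGroup G] (f : G →+ G) :
    Injective (f - AddMonoidHom.id G) ↔ ∀ g, f g = g → g = 0 := by
  simp [injective_iff_map_eq_zero, sub_eq_zero]

theorem AddAut.card_fixedPointFree {G : Type*} [AddCommGroup G] [Finite G] :
    Nat.card {f : AddAut G // ∀ g, f g = g → g = 0} =
      Nat.card {f : G →+ G // Injective f ∧ Injective (f - AddMonoidHom.id G)} := by
  simp_rw [AddMonoidHom.injective_sub_id_iff]
  exact Nat.card_congr
    { toFun f := ⟨f.1.toAddMonoidHom, f.1.injective, f.2⟩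
      invFun f := ⟨.ofBijective f.1 (Finite.injective_iff_bijective.mp f.2.1), f.2.2⟩
      left_inv _ := Subtype.ext (AddEquiv.ext fun _ => rfl)
      right_inv _ := rfl }

theorem AddMonoidHom.card_preimage_of_surjective {G H : Type*} [AddGroup G] [AddGroup H]
    (φ : G →+ H) (hφ : Surjective φ) (s : Set H) :
    Nat.card (φ ⁻¹' s) = Nat.card φ.ker * Nat.card s := by
  let e := QuotientAddGroup.quotientKerEquivOfSurjective φ hφ
  have hs : φ ⁻¹' s = QuotientAddGroup.mk ⁻¹' (e ⁻¹' s) := rfl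
  rw [hs, Nat.card_congr (QuotientAddGroup.preimageMkEquivAddSubgroupProdSet _ _), Nat.card_prod,
    Nat.card_preimage_of_injective e.injective (by simp [e.surjective.range_eq])]

namespace ZMod

theorem isUnit_iff_castHom_ne_zero {p n : ℕ} (hp : p.Prime) (hn : n ≠ 0) (x : ZMod (p ^ n)) :
    IsUnit x ↔ castHom (dvd_pow_self p hn) (ZMod p) x ≠ 0 := by
  have : NeZero (p ^ n) := ⟨pow_ne_zero _ hp.ne_zero⟩
  rw [← natCast_zmod_val x, isUnit_iff_coprime, map_natCast, Ne, natCast_eq_zero_iff,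
    Nat.coprime_pow_right_iff (Nat.pos_of_ne_zero hn), Nat.coprime_comm, hp.coprime_iff_not_dvd]

theorem card_isUnit_and_isUnit_sub_one {p n : ℕ} (hp : p.Prime) (hn : n ≠ 0) :
    Nat.card {x : ZMod (p ^ n) // IsUnit x ∧ IsUnit (x - 1)} = p ^ (n - 1) * (p - 2) := by
  have : Fact p.Prime := ⟨hp⟩
  set φ := (castHom (dvd_pow_self p hn) (ZMod p)).toAddMonoidHom
  have hφ : Surjective φ := castHom_surjective (dvd_pow_self p hn)
  have hker : Nat.card φ.ker = p ^ (n - 1) := by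
    have h := φ.card_preimage_of_surjective hφ Set.univ
    rw [Set.preimage_univ, Nat.card_univ, Nat.card_univ, Nat.card_zmod, Nat.card_zmod] at h
    apply Nat.eq_of_mul_eq_mul_right hp.pos
    rw [← h, ← pow_succ, Nat.sub_add_cancel (Nat.one_le_iff_ne_zero.mpr hn)]
  have hcond : {x : ZMod (p ^ n) | IsUnit x ∧ IsUnit (x - 1)} = φ ⁻¹' {0, 1}ᶜ := by
    ext x
    simp only [Set.mem_ofPred_eq, Set.mem_preimage, Set.mem_compl_iff, Set.mem_insert_iff,
      Set.mem_singleton_iff, not_or, isUnit_iff_castHom_ne_zero hp hn, map_sub, map_one,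
      sub_ne_zero]
    rfl
  have h01 : Nat.card ({0, 1}ᶜ : Set (ZMod p)) = p - 2 := by
    rw [Nat.card_coe_set_eq, Set.ncard_compl, Set.ncard_pair zero_ne_one, Nat.card_zmod]
  rw [← Set.coe_ofPred, hcond, φ.card_preimage_of_surjective hφ, hker, h01]

theorem isNilpotent_natCast_of_dvd {p c : ℕ} (k : ℕ) (h : p ∣ c) :
    IsNilpotent (c : ZMod (p ^ k)) :=
  ⟨k, by rw [← Nat.cast_pow, natCast_eq_zero_iff]; exact pow_dvd_pow_of_dvd h k⟩

theorem isNilpotent_pow_div_pow {p a b : ℕ} (hp : p ≠ 0) (hab : a < b) (k : ℕ) :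
    IsNilpotent ((p ^ b / p ^ a : ℕ) : ZMod (p ^ k)) := by
  refine isNilpotent_natCast_of_dvd k ?_
  rw [Nat.pow_div hab.le (Nat.pos_of_ne_zero hp)]
  exact dvd_pow_self p (Nat.sub_ne_zero_of_lt hab)

variable {m n : ℕ}

def inclusionOfDvd (h : m ∣ n) : ZMod m →+ ZMod n :=
  lift m ⟨zmultiplesHom _ ((n / m : ℕ) : ZMod n), by
    rw [zmultiplesHom_apply, natCast_zsmul, nsmul_eq_mul, ← Nat.cast_mul, Nat.mul_div_cancel' h,
      natCast_self]⟩

theorem inclusionOfDvd_intCast (h : m ∣ n) (k : ℤ) :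
    inclusionOfDvd h k = ((n / m : ℕ) : ZMod n) * k := by
  rw [inclusionOfDvd, lift_coe, zmultiplesHom_apply, zsmul_eq_mul, mul_comm]

theorem castHom_inclusionOfDvd (h : m ∣ n) (x : ZMod m) :
    castHom h (ZMod m) (inclusionOfDvd h x) = ((n / m : ℕ) : ZMod m) * x := by
  obtain ⟨k, rfl⟩ := intCast_surjective x
  rw [inclusionOfDvd_intCast, map_mul, map_natCast, map_intCast]

theorem isNilpotent_inclusionOfDvd (h : m ∣ n) (hN : IsNilpotent ((n / m : ℕ) : ZMod n))
    (x : ZMod m) : IsNilpotent (inclusionOfDvd h x) := by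
  obtain ⟨k, rfl⟩ := intCast_surjective x
  rw [inclusionOfDvd_intCast]
  exact (Commute.all _ _).isNilpotent_mul_right hN

theorem inclusionOfDvd_injective [NeZero n] (h : m ∣ n) : Injective (inclusionOfDvd h) := by
  rw [injective_iff_map_eq_zero]
  intro x hx
  obtain ⟨k, rfl⟩ := intCast_surjective x
  obtain ⟨d, rfl⟩ := h
  have hm : 0 < m := Nat.pos_of_ne_zero (left_ne_zero_of_mul (NeZero.ne (m * d)))
  have hd : (d : ℤ) ≠ 0 := by exact_mod_cast right_ne_zero_of_mul (NeZero.ne (m * d))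
  rw [inclusionOfDvd_intCast, Nat.mul_div_cancel_left d hm, ← Int.cast_natCast, ← Int.cast_mul,
    intCast_zmod_eq_zero_iff_dvd, Nat.cast_mul, mul_comm (m : ℤ), mul_dvd_mul_iff_left hd] at hx
  rwa [intCast_zmod_eq_zero_iff_dvd]

theorem exists_inclusionOfDvd_eq [NeZero n] (h : m ∣ n) {c : ZMod n} (hc : m • c = 0) :
    ∃ x, inclusionOfDvd h x = c := by
  obtain ⟨d, rfl⟩ := h
  have hm : 0 < m := Nat.pos_of_ne_zero (left_ne_zero_of_mul (NeZero.ne (m * d)))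
  rw [← natCast_zmod_val c, nsmul_eq_mul, ← Nat.cast_mul, natCast_eq_zero_iff,
    Nat.mul_dvd_mul_iff_left hm] at hc
  obtain ⟨j, hj⟩ := hc
  refine ⟨(j : ℤ), ?_⟩
  rw [inclusionOfDvd_intCast, Nat.mul_div_cancel_left d hm, ← natCast_zmod_val c, hj]
  push_cast
  rfl

theorem addMonoidHom_prod_ext_s6 {M : Type*} [AddMonoid M] [NeZero m] [NeZero n]
    {f g : ZMod m × ZMod n →+ M} (h₁ : f (1, 0) = g (1, 0)) (h₂ : f (0, 1) = g (0, 1)) :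
    f = g := by
  ext ⟨x, y⟩
  have hxy : (x, y) = x.val • ((1, 0) : ZMod m × ZMod n) + y.val • (0, 1) := by simp
  rw [hxy, map_add, map_nsmul, map_nsmul, h₁, h₂, map_add, map_nsmul, map_nsmul]

def matrixEnd (h : m ∣ n) (q : ZMod m × ZMod m × ZMod m × ZMod n) :
    ZMod m × ZMod n →+ ZMod m × ZMod n :=
  ((AddMonoidHom.mulLeft q.1).coprod
      ((AddMonoidHom.mulLeft q.2.1).comp (castHom h (ZMod m)).toAddMonoidHom)).prod
    (((inclusionOfDvd h).comp (AddMonoidHom.mulLeft q.2.2.1)).coprod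
      (AddMonoidHom.mulLeft q.2.2.2))

@[simp]
theorem matrixEnd_apply (h : m ∣ n) (α β γ : ZMod m) (δ : ZMod n) (x : ZMod m) (y : ZMod n) :
    matrixEnd h (α, β, γ, δ) (x, y) =
      (α * x + β * castHom h (ZMod m) y, inclusionOfDvd h (γ * x) + δ * y) :=
  rfl

theorem matrixEnd_sub_id (h : m ∣ n) (α β γ : ZMod m) (δ : ZMod n) :
    matrixEnd h (α, β, γ, δ) - AddMonoidHom.id _ = matrixEnd h (α - 1, β, γ, δ - 1) := by
  ext ⟨x, y⟩ <;> simp <;> ring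

theorem matrixEnd_bijective [NeZero n] (h : m ∣ n) : Bijective (matrixEnd h) := by
  have : NeZero m := ⟨fun hm => NeZero.ne n (Nat.eq_zero_of_zero_dvd (hm ▸ h))⟩
  constructor
  · rintro ⟨α, β, γ, δ⟩ ⟨α', β', γ', δ'⟩ he
    have h₁ := congr($he (1, 0))
    have h₂ := congr($he (0, 1))
    simp only [matrixEnd_apply, Prod.mk.injEq, mul_one, mul_zero, map_one, map_zero, add_zero,
      zero_add] at h₁ h₂
    obtain ⟨rfl, hγ⟩ := h₁
    obtain ⟨rfl, rfl⟩ := h₂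
    rw [inclusionOfDvd_injective h hγ]
  · intro f
    have hc : m • (f (1, 0)).2 = 0 := by
      rw [← Prod.smul_snd, ← map_nsmul]
      simp [Prod.mk_zero_zero]
    obtain ⟨γ, hγ⟩ := exists_inclusionOfDvd_eq h hc
    refine ⟨((f (1, 0)).1, (f (0, 1)).1, γ, (f (0, 1)).2), addMonoidHom_prod_ext_s6 ?_ ?_⟩
    · simp [hγ]
    · simp [cast_one h]

-- `hxy` is the second row of `matrixEnd _ (α, β, γ, u) (x, y) = 0`, solved here for `y`.
theorem exists_isNilpotent_castHom_eq_mul {p a b : ℕ} (hp : p ≠ 0) (hab : a < b)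
    {γ x : ZMod (p ^ a)} {u : (ZMod (p ^ b))ˣ} {y : ZMod (p ^ b)}
    (hxy : inclusionOfDvd (pow_dvd_pow p hab.le) (γ * x) + u * y = 0) :
    ∃ N, IsNilpotent N ∧ castHom (pow_dvd_pow p hab.le) (ZMod (p ^ a)) y = N * x := by
  set h := pow_dvd_pow p hab.le
  refine ⟨-(castHom h _ ↑u⁻¹ * ((p ^ b / p ^ a : ℕ) : ZMod (p ^ a)) * γ), ?_, ?_⟩
  · exact ((Commute.all _ _).isNilpotent_mul_right <|
      (Commute.all _ _).isNilpotent_mul_left (isNilpotent_pow_div_pow hp hab a)).neg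
  · have hy : y = -(↑u⁻¹ * inclusionOfDvd h (γ * x)) := by
      linear_combination (↑u⁻¹ : ZMod (p ^ b)) * hxy - y * u.inv_mul
    rw [hy, map_neg, map_mul, castHom_inclusionOfDvd]
    ring

theorem isUnit_of_injective_matrixEnd {p a b : ℕ} (hp : p ≠ 0) (hab : a < b)
    {α β γ : ZMod (p ^ a)} {δ : ZMod (p ^ b)}
    (hinj : Injective (matrixEnd (pow_dvd_pow p hab.le) (α, β, γ, δ))) :
    IsUnit α ∧ IsUnit δ := by
  have : NeZero (p ^ a) := ⟨pow_ne_zero _ hp⟩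
  have : NeZero (p ^ b) := ⟨pow_ne_zero _ hp⟩
  have hsurj := Finite.injective_iff_surjective.mp hinj
  obtain ⟨⟨x, y⟩, hxy⟩ := hsurj (0, 1)
  simp only [matrixEnd_apply, Prod.mk.injEq] at hxy
  have hδ : IsUnit δ := by
    have hu := (isNilpotent_inclusionOfDvd (pow_dvd_pow p hab.le)
      (isNilpotent_pow_div_pow hp hab b) (γ * x)).isUnit_one_sub
    rw [← hxy.2, add_sub_cancel_left] at hu
    exact isUnit_of_mul_isUnit_left hu
  obtain ⟨⟨x, y⟩, hxy⟩ := hsurj (1, 0)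
  simp only [matrixEnd_apply, Prod.mk.injEq] at hxy
  obtain ⟨u, rfl⟩ := hδ
  obtain ⟨N, hN, hy⟩ := exists_isNilpotent_castHom_eq_mul hp hab hxy.2
  have hx : (α + β * N) * x = 1 := by
    rw [← hxy.1, hy]
    ring
  have hα := ((Commute.all β N).isNilpotent_mul_left hN).neg.isUnit_add_left_of_commute
    (isUnit_of_mul_isUnit_left (hx ▸ isUnit_one)) (Commute.all _ _)
  rw [add_neg_cancel_right] at hα
  exact ⟨hα, u.isUnit⟩

theorem injective_matrixEnd_of_isUnit {p a b : ℕ} (hp : p ≠ 0) (hab : a < b)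
    {α β γ : ZMod (p ^ a)} {δ : ZMod (p ^ b)} (hα : IsUnit α) (hδ : IsUnit δ) :
    Injective (matrixEnd (pow_dvd_pow p hab.le) (α, β, γ, δ)) := by
  obtain ⟨u, rfl⟩ := hδ
  rw [injective_iff_map_eq_zero]
  rintro ⟨x, y⟩ hxy
  simp only [matrixEnd_apply, Prod.mk_eq_zero] at hxy
  obtain ⟨N, hN, hy⟩ := exists_isNilpotent_castHom_eq_mul hp hab hxy.2
  have hu : IsUnit (α + β * N) :=
    ((Commute.all β N).isNilpotent_mul_left hN).isUnit_add_left_of_commute hα (Commute.all _ _)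
  have hx : x = 0 := hu.mul_right_eq_zero.mp (by linear_combination hxy.1 - β * hy)
  subst hx
  simpa [u.isUnit.mul_right_eq_zero] using hxy.2

theorem injective_matrixEnd_iff {p a b : ℕ} (hp : p ≠ 0) (hab : a < b)
    (α β γ : ZMod (p ^ a)) (δ : ZMod (p ^ b)) :
    Injective (matrixEnd (pow_dvd_pow p hab.le) (α, β, γ, δ)) ↔ IsUnit α ∧ IsUnit δ :=
  ⟨isUnit_of_injective_matrixEnd hp hab, fun h => injective_matrixEnd_of_isUnit hp hab h.1 h.2⟩

end ZMod

/-- For a prime `p` and positive integers `a < b`, the number of fixed-point-free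
automorphisms of `ℤ/p^a ⊕ ℤ/p^b` is `p^(3a+b-2)(p-2)²`. -/
theorem card_fpf_automorphisms_zmod_pa_zmod_pb (p : ℕ) (hp : p.Prime)
    (a b : ℕ) (ha : 0 < a) (hab : a < b) :
    Nat.card {f : AddAut (ZMod (p ^ a) × ZMod (p ^ b)) //
      ∀ g : ZMod (p ^ a) × ZMod (p ^ b), f g = g → g = 0} =
    p ^ (3 * a + b - 2) * (p - 2) ^ 2 := by
  have : NeZero (p ^ a) := ⟨pow_ne_zero _ hp.ne_zero⟩
  have : NeZero (p ^ b) := ⟨pow_ne_zero _ hp.ne_zero⟩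
  have h := pow_dvd_pow p hab.le
  have hcond : ∀ q : ZMod (p ^ a) × ZMod (p ^ a) × ZMod (p ^ a) × ZMod (p ^ b),
      q ∈ {α | IsUnit α ∧ IsUnit (α - 1)} ×ˢ Set.univ ×ˢ Set.univ ×ˢ
          {δ | IsUnit δ ∧ IsUnit (δ - 1)} ↔
        Injective (ZMod.matrixEnd h q) ∧
          Injective (ZMod.matrixEnd h q - AddMonoidHom.id (ZMod (p ^ a) × ZMod (p ^ b))) := by
    rintro ⟨α, β, γ, δ⟩
    rw [ZMod.matrixEnd_sub_id, ZMod.injective_matrixEnd_iff hp.ne_zero hab,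
      ZMod.injective_matrixEnd_iff hp.ne_zero hab]
    simp only [Set.mem_prod, Set.mem_ofPred_eq, Set.mem_univ, true_and]
    tauto
  rw [AddAut.card_fixedPointFree,
    ← Nat.card_congr ((Equiv.ofBijective _ (ZMod.matrixEnd_bijective h)).subtypeEquiv hcond),
    Nat.card_coe_set_eq, Set.ncard_prod, Set.ncard_prod, Set.ncard_prod, Set.ncard_univ,
    ← Nat.card_coe_set_eq, ← Nat.card_coe_set_eq, Set.coe_ofPred, Set.coe_ofPred, Nat.card_zmod,
    ZMod.card_isUnit_and_isUnit_sub_one hp ha.ne',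
    ZMod.card_isUnit_and_isUnit_sub_one hp (by omega),
    show 3 * a + b - 2 = (a - 1) + a + a + (b - 1) by omega]
  ring
end

section
/- Let a and b be positive integers with a < b. The group Z_{2^a} ⊕ Z_{2^b} admits no fixed-point-free automorphism; that is, every automorphism of Z_{2^a} ⊕ Z_{2^b} fixes some non-identity element. -/
/-!
The subgroup of elements of `G = ℤ/2^a ⊕ ℤ/2^b` that are divisible by `2^a` and killed by `2` is
mapped into itself by every endomorphism. Since `a < b` it is `{0, (0, 2^(b-1))}`, so an
automorphism, being injective, has to fix `(0, 2^(b-1))`.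
-/

theorem AddEquiv.apply_eq_self_of_unique_divisible_two_torsion {G : Type*} [AddCommGroup G]
    (f : G ≃+ G) (n : ℕ) {x : G} (hx : x ≠ 0) (hxn : ∃ z, n • z = x) (hx2 : 2 • x = 0)
    (huniq : ∀ y : G, (∃ z, n • z = y) → 2 • y = 0 → y = 0 ∨ y = x) : f x = x := by
  obtain ⟨z, rfl⟩ := hxn
  rcases huniq (f (n • z)) ⟨f z, (map_nsmul f n z).symm⟩ (by rw [← map_nsmul, hx2, map_zero])
    with hzero | hfix
  · exact absurd ((map_eq_zero_iff f f.injective).mp hzero) hx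
  · exact hfix

namespace ZMod

theorem two_pow_ne_zero (k : ℕ) : (2 : ZMod (2 ^ (k + 1))) ^ k ≠ 0 := by
  have hlt : 2 ^ k < 2 ^ (k + 1) := Nat.pow_lt_pow_right (by norm_num) (by omega)
  exact_mod_cast fun h ↦ absurd (Nat.le_of_dvd (by positivity)
    ((natCast_eq_zero_iff _ _).mp h)) hlt.not_ge

theorem eq_zero_or_eq_two_pow_of_two_nsmul_eq_zero (k : ℕ) {x : ZMod (2 ^ (k + 1))}
    (hx : 2 • x = 0) : x = 0 ∨ x = 2 ^ k := by
  have hdvd : 2 ^ k ∣ x.val := by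
    refine Nat.dvd_of_mul_dvd_mul_left two_pos ?_
    rw [← pow_succ', ← natCast_eq_zero_iff]
    push_cast [natCast_zmod_val]
    rwa [nsmul_eq_mul, Nat.cast_ofNat] at hx
  obtain ⟨m, hm⟩ := hdvd
  have hm2 : m < 2 := by
    have := x.val_lt
    rw [hm, pow_succ] at this
    exact Nat.lt_of_mul_lt_mul_left this
  rw [← natCast_zmod_val x, hm]
  interval_cases m <;> simp

theorem eq_zero_or_eq_of_two_pow_nsmul_of_two_nsmul_eq_zero {a c : ℕ}
    (y : ZMod (2 ^ a) × ZMod (2 ^ (c + 1))) (hy : ∃ z, 2 ^ a • z = y) (hy2 : 2 • y = 0) :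
    y = 0 ∨ y = (0, 2 ^ c) := by
  obtain ⟨z, rfl⟩ := hy
  have hfst : (2 ^ a • z).1 = 0 := by
    rw [Prod.smul_fst, nsmul_eq_mul]
    exact_mod_cast mul_eq_zero_of_left (natCast_self (2 ^ a)) z.1
  have hsnd : 2 • (2 ^ a • z).2 = 0 := by
    rw [← Prod.smul_snd, hy2, Prod.snd_zero]
  rcases eq_zero_or_eq_two_pow_of_two_nsmul_eq_zero c hsnd with h | h
  · exact .inl (Prod.ext hfst h)
  · exact .inr (Prod.ext hfst h)

end ZMod

theorem no_fpf_automorphism_zmod_two_pow_general (a b : ℕ) (hab : a < b)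
    (f : AddAut (ZMod (2 ^ a) × ZMod (2 ^ b))) :
    ∃ g : ZMod (2 ^ a) × ZMod (2 ^ b), g ≠ 0 ∧ f g = g := by
  obtain ⟨c, rfl⟩ : ∃ c, b = c + 1 := ⟨b - 1, by omega⟩
  have hac : a ≤ c := by omega
  have hne : ((0, 2 ^ c) : ZMod (2 ^ a) × ZMod (2 ^ (c + 1))) ≠ 0 :=
    fun h ↦ ZMod.two_pow_ne_zero c (congrArg Prod.snd h)
  have hdiv : ∃ z, 2 ^ a • z = ((0, 2 ^ c) : ZMod (2 ^ a) × ZMod (2 ^ (c + 1))) :=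
    ⟨(0, 2 ^ (c - a)), by
      rw [Prod.smul_mk, smul_zero, nsmul_eq_mul, Nat.cast_pow, Nat.cast_ofNat, ← pow_add,
        Nat.add_sub_cancel' hac]⟩
  have htwo : 2 • ((0, 2 ^ c) : ZMod (2 ^ a) × ZMod (2 ^ (c + 1))) = 0 := by
    rw [Prod.smul_mk, smul_zero, nsmul_eq_mul, Nat.cast_ofNat, ← pow_succ']
    exact Prod.ext rfl (by exact_mod_cast ZMod.natCast_self (2 ^ (c + 1)))
  exact ⟨_, hne, f.apply_eq_self_of_unique_divisible_two_torsion (2 ^ a) hne hdiv htwo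
    ZMod.eq_zero_or_eq_of_two_pow_nsmul_of_two_nsmul_eq_zero⟩

/-- For positive integers `a < b`, the group `ℤ/2^a ⊕ ℤ/2^b` has no
fixed-point-free automorphism: every automorphism fixes a nonzero element. -/
theorem no_fpf_automorphism_zmod_two_pow (a b : ℕ) (ha : 0 < a) (hab : a < b)
    (f : AddAut (ZMod (2 ^ a) × ZMod (2 ^ b))) :
    ∃ g : ZMod (2 ^ a) × ZMod (2 ^ b), g ≠ 0 ∧ f g = g :=
  no_fpf_automorphism_zmod_two_pow_general a b hab f
end

section
/- Let p be a prime and let k ∈ Z_p be nonzero. The number of automorphisms φ of G = Z_p ⊕ Z_{p²} that fix the element (k,1) (and hence fix pointwise the cyclic subgroup generated by (k,1)) is p(p-1). -/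
namespace CardAutAux

variable (p : ℕ)

/-- reduction `ZMod p² → ZMod p` as a ring hom. -/
def piR : ZMod (p^2) →+* ZMod p :=
  ZMod.castHom (dvd_pow_self p two_ne_zero) (ZMod p)

lemma hp2 : (p : ZMod (p^2)) * (p : ZMod (p^2)) = 0 := by
  have : ((p^2 : ℕ) : ZMod (p^2)) = 0 := ZMod.natCast_self _
  push_cast at this
  linear_combination this

lemma key (n : ℕ) : ((p * (n % p) : ℕ) : ZMod (p^2)) = ((p * n : ℕ) : ZMod (p^2)) := by
  conv_rhs => rw [← Nat.div_add_mod n p]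
  push_cast
  have := hp2 p
  linear_combination (-((n / p : ℕ) : ZMod (p^2))) * this

/-- injection `ZMod p → ZMod p²` -/
def iota (x : ZMod p) : ZMod (p^2) := p * (x.val : ZMod (p^2))

variable [NeZero p]

lemma iota_add (x y : ZMod p) : iota p (x + y) = iota p x + iota p y := by
  unfold iota
  rw [ZMod.val_add]
  have := key p (x.val + y.val)
  push_cast at this ⊢
  linear_combination this

lemma p_mul (w : ZMod (p^2)) : (p : ZMod (p^2)) * w = iota p (piR p w) := by
  have h1 : (piR p w).val = w.val % p := by
    unfold piR
    rw [ZMod.castHom_apply]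
    have hval : (ZMod.cast w : ZMod p) = ((w.val : ℕ) : ZMod p) := (ZMod.natCast_val w).symm
    rw [hval, ZMod.val_natCast]
  unfold iota
  rw [h1]
  have h2 := key p w.val
  push_cast at h2
  rw [h2]
  congr 1
  rw [ZMod.natCast_val, ZMod.cast_id]

lemma piR_iota (x : ZMod p) : piR p (iota p x) = 0 := by
  unfold iota
  rw [map_mul, map_natCast]
  simp [ZMod.natCast_self]

lemma u_mul_iota (u : ZMod (p^2)) (v : ZMod p) :
    u * iota p v = iota p (piR p u * v) := by
  unfold iota
  have h1 : u * ((p : ZMod (p^2)) * (v.val : ZMod (p^2))) = (p : ZMod (p^2)) * (u * v.val) := by ring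
  rw [h1, p_mul, map_mul, map_natCast]
  congr 1
  have : ((v.val : ℕ) : ZMod p) = v := by rw [ZMod.natCast_val, ZMod.cast_id]
  rw [this]

lemma iota_mul (w : ZMod p) (y : ZMod (p^2)) :
    iota p w * y = iota p (w * piR p y) := by
  rw [mul_comm, u_mul_iota, mul_comm]

lemma iota_mul_iota (u v : ZMod p) : iota p u * iota p v = 0 := by
  unfold iota
  have := hp2 p
  linear_combination ((u.val : ZMod (p^2)) * (v.val : ZMod (p^2))) * this

lemma iota_inj : Function.Injective (iota p) := by
  intro x y h
  unfold iota at h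
  have hp0 : 0 < p := Nat.pos_of_ne_zero (NeZero.ne p)
  have hx : (p * x.val : ℕ) < p^2 := by
    have := x.val_lt; nlinarith
  have hy : (p * y.val : ℕ) < p^2 := by
    have := y.val_lt; nlinarith
  have h' : ((p * x.val : ℕ) : ZMod (p^2)) = ((p * y.val : ℕ) : ZMod (p^2)) := by push_cast; exact h
  have := ZMod.val_cast_of_lt hx ▸ ZMod.val_cast_of_lt hy ▸ congrArg ZMod.val h'
  have hval : x.val = y.val := Nat.eq_of_mul_eq_mul_left (Nat.pos_of_ne_zero (NeZero.ne p)) this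
  exact ZMod.val_injective p hval

lemma iota_zero : iota p 0 = 0 := by simp [iota, ZMod.val_zero]

lemma ptorsion (e : ZMod (p^2)) (he : (p : ZMod (p^2)) * e = 0) : ∃ c, iota p c = e := by
  have hp0 : 0 < p := Nat.pos_of_ne_zero (NeZero.ne p)
  have he' : ((p * e.val : ℕ) : ZMod (p^2)) = 0 := by
    push_cast
    rw [ZMod.natCast_val, ZMod.cast_id]
    exact he
  have hdvd : p^2 ∣ p * e.val := (ZMod.natCast_eq_zero_iff _ _).mp he'
  obtain ⟨m, hm0⟩ := hdvd
  have hm : e.val = p * m := by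
    have h : p * e.val = p * (p * m) := by rw [hm0]; ring
    exact Nat.eq_of_mul_eq_mul_left hp0 h
  have hmlt : m < p := by
    have := e.val_lt
    rw [hm] at this
    by_contra h
    push_neg at h
    have : p * p ≤ p * m := Nat.mul_le_mul_left p h
    nlinarith [e.val_lt, hm]
  refine ⟨(m : ZMod p), ?_⟩
  unfold iota
  rw [ZMod.val_natCast, Nat.mod_eq_of_lt hmlt]
  have : e = ((e.val : ℕ) : ZMod (p^2)) := by rw [ZMod.natCast_val, ZMod.cast_id]
  rw [this, hm]
  push_cast
  ring

section E

variable {p}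

/-- matrix-style endomorphism -/
def E (a b c : ZMod p) (d : ZMod (p^2)) (z : ZMod p × ZMod (p^2)) :
    ZMod p × ZMod (p^2) :=
  (a * z.1 + b * piR p z.2, iota p (c * z.1) + d * z.2)

lemma E_add (a b c : ZMod p) (d : ZMod (p^2)) (z w : ZMod p × ZMod (p^2)) :
    E a b c d (z + w) = E a b c d z + E a b c d w := by
  unfold E
  rw [Prod.mk_add_mk]
  refine Prod.ext ?_ ?_
  · simp only [Prod.fst_add, Prod.snd_add, map_add]
    ring
  · simp only [Prod.fst_add, Prod.snd_add, mul_add, iota_add]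
    ring

lemma E_comp (a b c : ZMod p) (d : ZMod (p^2)) (a' b' c' : ZMod p) (d' : ZMod (p^2))
    (z : ZMod p × ZMod (p^2)) :
    E a b c d (E a' b' c' d' z) =
      E (a * a') (a * b' + b * piR p d') (c * a' + piR p d * c')
        (iota p (c * b') + d * d') z := by
  unfold E
  refine Prod.ext ?_ ?_
  · simp only [map_add, map_mul, piR_iota]
    ring
  · simp only [mul_add, iota_add, add_mul]
    have h1 : iota p (c * (b' * piR p z.2)) = iota p (c * b') * z.2 := by
      rw [iota_mul]; ring_nf
    have h2 : d * iota p (c' * z.1) = iota p (piR p d * (c' * z.1)) := u_mul_iota p _ _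
    rw [h1, h2]
    have h3 : iota p (c * (a' * z.1)) = iota p (c * a' * z.1) := by ring_nf
    have h4 : iota p (piR p d * (c' * z.1)) = iota p (piR p d * c' * z.1) := by ring_nf
    rw [h3, h4]
    ring

lemma E_id (z : ZMod p × ZMod (p^2)) : E (1 : ZMod p) 0 0 1 z = z := by
  unfold E
  simp [iota_zero]

end E

section F

variable {p : ℕ} [NeZero p]

lemma piR_one : piR p 1 = 1 := map_one _

lemma piR_eq_val (y : ZMod (p^2)) : piR p y = ((y.val : ℕ) : ZMod p) := by
  unfold piR
  rw [ZMod.castHom_apply]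
  exact (ZMod.natCast_val y).symm

lemma GF (a : (ZMod p)ˣ) (c k : ZMod p) (z : ZMod p × ZMod (p^2)) :
    E ((a⁻¹ : (ZMod p)ˣ) : ZMod p) (-(((a⁻¹ : (ZMod p)ˣ) : ZMod p) * (k * (1 - (a : ZMod p)))))
      (-(c * ((a⁻¹ : (ZMod p)ˣ) : ZMod p)))
      (1 + iota p (c * k) - iota p ((-(c * ((a⁻¹ : (ZMod p)ˣ) : ZMod p))) * (k * (1 - (a : ZMod p)))))
      (E (a : ZMod p) (k * (1 - (a : ZMod p))) c (1 - iota p (c * k)) z) = z := by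
  set a' : ZMod p := ((a⁻¹ : (ZMod p)ˣ) : ZMod p) with ha'
  set b : ZMod p := k * (1 - (a : ZMod p)) with hb
  set b' : ZMod p := -(a' * b) with hb'
  set c' : ZMod p := -(c * a') with hc'
  set d : ZMod (p^2) := 1 - iota p (c * k) with hd
  set d' : ZMod (p^2) := 1 + iota p (c * k) - iota p (c' * b) with hd'
  have ha : a' * (a : ZMod p) = 1 := a.inv_mul
  have hpd : piR p d = 1 := by rw [hd, map_sub, piR_iota, map_one, sub_zero]
  have hpd' : piR p d' = 1 := by
    rw [hd', map_sub, map_add, piR_iota, piR_iota, map_one, add_zero, sub_zero]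
  rw [E_comp]
  rw [show a' * (a : ZMod p) = 1 from ha]
  rw [show a' * b + b' * piR p d = 0 by rw [hpd, hb']; ring]
  rw [show c' * (a : ZMod p) + piR p d' * c = 0 by
    rw [hpd', hc', neg_mul, mul_assoc, ha, mul_one, one_mul]; ring]
  rw [show iota p (c' * b) + d' * d = 1 by
    rw [hd', hd]
    have h1 := iota_mul_iota p (c * k) (c * k)
    have h2 := iota_mul_iota p (c' * b) (c * k)
    linear_combination h2 - h1]
  exact E_id z

lemma FG (a : (ZMod p)ˣ) (c k : ZMod p) (z : ZMod p × ZMod (p^2)) :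
    E (a : ZMod p) (k * (1 - (a : ZMod p))) c (1 - iota p (c * k))
      (E ((a⁻¹ : (ZMod p)ˣ) : ZMod p) (-(((a⁻¹ : (ZMod p)ˣ) : ZMod p) * (k * (1 - (a : ZMod p)))))
        (-(c * ((a⁻¹ : (ZMod p)ˣ) : ZMod p)))
        (1 + iota p (c * k) - iota p ((-(c * ((a⁻¹ : (ZMod p)ˣ) : ZMod p))) * (k * (1 - (a : ZMod p)))))
        z) = z := by
  set a' : ZMod p := ((a⁻¹ : (ZMod p)ˣ) : ZMod p) with ha'
  set b : ZMod p := k * (1 - (a : ZMod p)) with hb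
  set b' : ZMod p := -(a' * b) with hb'
  set c' : ZMod p := -(c * a') with hc'
  set d : ZMod (p^2) := 1 - iota p (c * k) with hd
  set d' : ZMod (p^2) := 1 + iota p (c * k) - iota p (c' * b) with hd'
  have ha : (a : ZMod p) * a' = 1 := a.mul_inv
  have hpd : piR p d = 1 := by rw [hd, map_sub, piR_iota, map_one, sub_zero]
  have hpd' : piR p d' = 1 := by
    rw [hd', map_sub, map_add, piR_iota, piR_iota, map_one, add_zero, sub_zero]
  rw [E_comp]
  rw [show (a : ZMod p) * a' = 1 from ha]
  rw [show (a : ZMod p) * b' + b * piR p d' = 0 by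
    rw [hpd', hb', mul_neg, ← mul_assoc, ha, one_mul]; ring]
  rw [show c * a' + piR p d * c' = 0 by rw [hpd, hc']; ring]
  rw [show iota p (c * b') + d * d' = 1 by
    have hcb : c * b' = c' * b := by rw [hb', hc']; ring
    rw [hcb, hd', hd]
    have h1 := iota_mul_iota p (c * k) (c * k)
    have h2 := iota_mul_iota p (c' * b) (c * k)
    linear_combination h2 - h1]
  exact E_id z

/-- The automorphism attached to `(a, c)`. -/
def Fmap (a : (ZMod p)ˣ) (c k : ZMod p) : AddAut (ZMod p × ZMod (p^2)) :=
  AddEquiv.mk'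
    ⟨E (a : ZMod p) (k * (1 - (a : ZMod p))) c (1 - iota p (c * k)),
     E ((a⁻¹ : (ZMod p)ˣ) : ZMod p) (-(((a⁻¹ : (ZMod p)ˣ) : ZMod p) * (k * (1 - (a : ZMod p)))))
       (-(c * ((a⁻¹ : (ZMod p)ˣ) : ZMod p)))
       (1 + iota p (c * k) - iota p ((-(c * ((a⁻¹ : (ZMod p)ˣ) : ZMod p))) * (k * (1 - (a : ZMod p))))),
     GF a c k, FG a c k⟩
    (E_add _ _ _ _)

lemma Fmap_apply (a : (ZMod p)ˣ) (c k : ZMod p) (z : ZMod p × ZMod (p^2)) :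
    Fmap a c k z = E (a : ZMod p) (k * (1 - (a : ZMod p))) c (1 - iota p (c * k)) z := rfl

lemma Fmap_fix (a : (ZMod p)ˣ) (c k : ZMod p) :
    Fmap a c k (k, 1) = (k, (1 : ZMod (p^2))) := by
  rw [Fmap_apply]
  unfold E
  refine Prod.ext ?_ ?_
  · show (a : ZMod p) * k + k * (1 - (a : ZMod p)) * piR p 1 = k
    rw [piR_one]; ring
  · show iota p (c * k) + (1 - iota p (c * k)) * 1 = 1
    ring

lemma Fmap_one_zero (a : (ZMod p)ˣ) (c k : ZMod p) :
    Fmap a c k (1, 0) = ((a : ZMod p), iota p c) := by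
  rw [Fmap_apply]
  unfold E
  refine Prod.ext ?_ ?_
  · show (a : ZMod p) * 1 + k * (1 - (a : ZMod p)) * piR p 0 = (a : ZMod p)
    rw [map_zero]; ring
  · show iota p (c * 1) + (1 - iota p (c * k)) * 0 = iota p c
    rw [mul_one, mul_zero, add_zero]

lemma struct (f : AddAut (ZMod p × ZMod (p^2))) (c : ZMod p)
    (hc : iota p c = (f (1, 0)).2) (z : ZMod p × ZMod (p^2)) :
    f z = E ((f (1, 0)).1) ((f ((0 : ZMod p), (1 : ZMod (p^2)))).1) c
      ((f ((0 : ZMod p), (1 : ZMod (p^2)))).2) z := by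
  obtain ⟨x, y⟩ := z
  have hz : ((x, y) : ZMod p × ZMod (p^2)) =
      x.val • ((1 : ZMod p), (0 : ZMod (p^2))) + y.val • ((0 : ZMod p), (1 : ZMod (p^2))) := by
    refine Prod.ext ?_ ?_
    · show x = x.val • (1 : ZMod p) + y.val • (0 : ZMod p)
      rw [smul_zero, add_zero, nsmul_eq_mul, mul_one, ZMod.natCast_val, ZMod.cast_id]
    · show y = x.val • (0 : ZMod (p^2)) + y.val • (1 : ZMod (p^2))
      rw [smul_zero, zero_add, nsmul_eq_mul, mul_one, ZMod.natCast_val, ZMod.cast_id]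
  have hfz : f (x, y) = x.val • f (1, 0) + y.val • f ((0 : ZMod p), (1 : ZMod (p^2))) := by
    conv_lhs => rw [hz]
    rw [map_add, map_nsmul, map_nsmul]
  rw [hfz]
  unfold E
  refine Prod.ext ?_ ?_
  · show x.val • (f (1, 0)).1 + y.val • (f ((0 : ZMod p), (1 : ZMod (p^2)))).1 = _
    rw [nsmul_eq_mul, nsmul_eq_mul, ZMod.natCast_val, ZMod.cast_id, piR_eq_val]
    ring
  · show x.val • (f (1, 0)).2 + y.val • (f ((0 : ZMod p), (1 : ZMod (p^2)))).2 = _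
    rw [← hc, nsmul_eq_mul, nsmul_eq_mul]
    have h1 : ((x.val : ℕ) : ZMod (p^2)) * iota p c = iota p (c * x) := by
      rw [u_mul_iota, map_natCast, ZMod.natCast_val, ZMod.cast_id, mul_comm]
    have h2 : ((y.val : ℕ) : ZMod (p^2)) = y := by rw [ZMod.natCast_val, ZMod.cast_id]
    rw [h1, h2, mul_comm y]

end F

end CardAutAux

/-- For a prime `p` and a nonzero `k ∈ ℤ/p`, the number of automorphisms of
`ℤ/p ⊕ ℤ/p²` fixing the element `(k, 1)` is `p(p-1)`. -/
theorem card_aut_fixing_k_one (p : ℕ) (hp : p.Prime) (k : ZMod p) (hk : k ≠ 0) :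
    Nat.card {f : AddAut (ZMod p × ZMod (p ^ 2)) //
      f (k, 1) = (k, (1 : ZMod (p ^ 2)))} = p * (p - 1) := by
  haveI := Fact.mk hp
  haveI : NeZero p := ⟨hp.ne_zero⟩
  classical
  let Φ : (ZMod p)ˣ × ZMod p →
      {f : AddAut (ZMod p × ZMod (p ^ 2)) // f (k, 1) = (k, (1 : ZMod (p ^ 2)))} :=
    fun ac => ⟨CardAutAux.Fmap ac.1 ac.2 k, CardAutAux.Fmap_fix ac.1 ac.2 k⟩
  have hΦ : Function.Bijective Φ := by
    constructor
    · rintro ⟨a₁, c₁⟩ ⟨a₂, c₂⟩ h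
      have h' : CardAutAux.Fmap a₁ c₁ k = CardAutAux.Fmap a₂ c₂ k := congrArg Subtype.val h
      have h1 : CardAutAux.Fmap a₁ c₁ k ((1 : ZMod p), (0 : ZMod (p^2)))
          = CardAutAux.Fmap a₂ c₂ k ((1 : ZMod p), (0 : ZMod (p^2))) := by rw [h']
      rw [CardAutAux.Fmap_one_zero, CardAutAux.Fmap_one_zero] at h1
      obtain ⟨ha, hc⟩ := Prod.mk.injEq _ _ _ _ ▸ h1
      have ha' : a₁ = a₂ := Units.ext ha
      have hc' : c₁ = c₂ := CardAutAux.iota_inj p hc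
      simp [ha', hc']
    · rintro ⟨f, hf⟩
      have hpe : (p : ZMod (p^2)) * (f ((1 : ZMod p), (0 : ZMod (p^2)))).2 = 0 := by
        have h0 : (p • ((1 : ZMod p), (0 : ZMod (p^2))) : ZMod p × ZMod (p^2)) = 0 := by
          refine Prod.ext ?_ ?_
          · show p • (1 : ZMod p) = 0
            rw [nsmul_eq_mul, mul_one, ZMod.natCast_self]
          · show p • (0 : ZMod (p^2)) = 0
            rw [smul_zero]
        have h1 : f (p • ((1 : ZMod p), (0 : ZMod (p^2)))) = 0 := by rw [h0, map_zero]
        rw [map_nsmul] at h1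
        have h2 := congrArg Prod.snd h1
        have h3 : p • (f ((1 : ZMod p), (0 : ZMod (p^2)))).2 = 0 := h2
        rwa [nsmul_eq_mul] at h3
      obtain ⟨c, hc⟩ := CardAutAux.ptorsion p _ hpe
      have hstruct := CardAutAux.struct f c hc
      set A : ZMod p := (f ((1 : ZMod p), (0 : ZMod (p^2)))).1 with hA
      set B : ZMod p := (f ((0 : ZMod p), (1 : ZMod (p^2)))).1 with hB
      set D : ZMod (p^2) := (f ((0 : ZMod p), (1 : ZMod (p^2)))).2 with hD
      have hk1 := hstruct (k, 1)
      rw [hf] at hk1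
      unfold CardAutAux.E at hk1
      obtain ⟨hfst, hsnd⟩ := Prod.mk.injEq _ _ _ _ ▸ hk1.symm
      -- hfst : A * k + B * piR p 1 = k ; hsnd : iota p (c * k) + D * 1 = 1
      rw [CardAutAux.piR_one, mul_one] at hfst
      rw [mul_one] at hsnd
      have hpD : CardAutAux.piR p D = 1 := by
        have := congrArg (CardAutAux.piR p) hsnd
        rwa [map_add, CardAutAux.piR_iota, zero_add, map_one] at this
      have hAne : A ≠ 0 := by
        intro h0
        have hval : f ((1 : ZMod p), CardAutAux.iota p (-c)) = 0 := by
          rw [hstruct (1, CardAutAux.iota p (-c))]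
          unfold CardAutAux.E
          refine Prod.ext ?_ ?_
          · show A * 1 + B * CardAutAux.piR p (CardAutAux.iota p (-c)) = 0
            rw [CardAutAux.piR_iota, mul_zero, add_zero, mul_one, h0]
          · show CardAutAux.iota p (c * 1) + D * CardAutAux.iota p (-c) = 0
            rw [CardAutAux.u_mul_iota, hpD, one_mul, mul_one, ← CardAutAux.iota_add]
            rw [add_neg_cancel, CardAutAux.iota_zero]
        have hinj : ((1 : ZMod p), CardAutAux.iota p (-c)) = (0 : ZMod p × ZMod (p^2)) := by
          apply f.injective
          rw [hval, map_zero]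
        have := congrArg Prod.fst hinj
        exact one_ne_zero this
      have hAu : IsUnit A := isUnit_iff_ne_zero.mpr hAne
      refine ⟨(hAu.unit, c), ?_⟩
      apply Subtype.ext
      show CardAutAux.Fmap hAu.unit c k = f
      apply DFunLike.ext
      intro z
      rw [CardAutAux.Fmap_apply, hstruct z, IsUnit.unit_spec]
      have hB' : k * (1 - A) = B := by linear_combination -hfst
      have hD' : 1 - CardAutAux.iota p (c * k) = D := by linear_combination -hsnd
      rw [hB', hD']
  rw [← Nat.card_eq_of_bijective Φ hΦ, Nat.card_prod, Nat.card_eq_fintype_card,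
    ZMod.card_units p, Nat.card_zmod, Nat.mul_comm]
end

section
/- Let p be a prime. The number of automorphisms φ of G = Z_p ⊕ Z_{p²} that fix both the element (1,0) and the element (0,p) (and hence fix pointwise the subgroup generated by (1,0) and (0,p)) is p². -/
private lemma pp0 (p : ℕ) : (p : ZMod (p ^ 2)) * p = 0 := by
  rw [← Nat.cast_mul, ← sq, ZMod.natCast_self]


private lemma cast_one_add (p : ℕ) (e : ZMod p) :
    (ZMod.cast (1 + (p : ZMod (p ^ 2)) * (e.val : ZMod (p ^ 2)) : ZMod (p ^ 2)) : ZMod p) = 1 := by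
  have hd : p ∣ p ^ 2 := dvd_pow_self p two_ne_zero
  rw [ZMod.cast_add hd, ZMod.cast_one hd, ZMod.cast_mul hd, ZMod.cast_natCast hd,
    ZMod.natCast_self, zero_mul, add_zero]

private lemma cast_one_sub (p : ℕ) (e : ZMod p) :
    (ZMod.cast (1 - (p : ZMod (p ^ 2)) * (e.val : ZMod (p ^ 2)) : ZMod (p ^ 2)) : ZMod p) = 1 := by
  have hd : p ∣ p ^ 2 := dvd_pow_self p two_ne_zero
  rw [ZMod.cast_sub hd, ZMod.cast_one hd, ZMod.cast_mul hd, ZMod.cast_natCast hd,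
    ZMod.natCast_self, zero_mul, sub_zero]

/-- The candidate automorphism `(x, y) ↦ (x + b * ȳ, (1 + p * e) * y)`. -/
def autOf (p : ℕ) (b e : ZMod p) : AddAut (ZMod p × ZMod (p ^ 2)) where
  toFun z := (z.1 + b * ZMod.castHom (dvd_pow_self p two_ne_zero) (ZMod p) z.2,
    (1 + (p : ZMod (p ^ 2)) * e.val) * z.2)
  invFun z := (z.1 - b * ZMod.castHom (dvd_pow_self p two_ne_zero) (ZMod p) z.2,
    (1 - (p : ZMod (p ^ 2)) * e.val) * z.2)
  left_inv z := by
    have h := pp0 p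
    have hd := dvd_pow_self p (two_ne_zero (α := ℕ))
    refine Prod.ext ?_ ?_ <;>
      simp [ZMod.cast_mul hd, cast_one_add, cast_one_sub]
    linear_combination (-(e.val : ZMod (p^2)) * e.val * z.2) * h
  right_inv z := by
    have h := pp0 p
    have hd := dvd_pow_self p (two_ne_zero (α := ℕ))
    refine Prod.ext ?_ ?_ <;>
      simp [ZMod.cast_mul hd, cast_one_add, cast_one_sub]
    linear_combination (-(e.val : ZMod (p^2)) * e.val * z.2) * h
  map_add' z w := by
    refine Prod.ext ?_ ?_ <;> simp [map_add] <;> ring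

lemma autOf_fix1 (p : ℕ) (b e : ZMod p) :
    autOf p b e (1, 0) = ((1 : ZMod p), (0 : ZMod (p ^ 2))) := by
  simp [autOf]

lemma autOf_fix2 (p : ℕ) (b e : ZMod p) :
    autOf p b e (0, (p : ZMod (p ^ 2))) = ((0 : ZMod p), (p : ZMod (p ^ 2))) := by
  have h := pp0 p
  have hd := dvd_pow_self p (two_ne_zero (α := ℕ))
  refine Prod.ext ?_ ?_ <;>
    simp [autOf, ZMod.cast_natCast hd, ZMod.natCast_self]
  linear_combination (e.val : ZMod (p^2)) * h

lemma autOf_apply01 (p : ℕ) (b e : ZMod p) :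
    autOf p b e (0, 1) = (b, 1 + (p : ZMod (p ^ 2)) * e.val) := by
  have hd := dvd_pow_self p (two_ne_zero (α := ℕ))
  refine Prod.ext ?_ ?_ <;> simp [autOf, ZMod.cast_one hd]

/-- Every element decomposes along the generators. -/
lemma decomp (p : ℕ) [NeZero p] [NeZero (p ^ 2)] (z : ZMod p × ZMod (p ^ 2)) :
    z = z.1.val • ((1 : ZMod p), (0 : ZMod (p ^ 2)))
      + z.2.val • ((0 : ZMod p), (1 : ZMod (p ^ 2))) := by
  refine Prod.ext ?_ ?_ <;>
    simp [nsmul_eq_mul, ZMod.natCast_val, ZMod.cast_id]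

/-- For a prime `p`, the number of automorphisms of `ℤ/p ⊕ ℤ/p²` fixing both
`(1, 0)` and `(0, p)` is `p²`. -/
theorem card_aut_fixing_one_zero_and_zero_p (p : ℕ) (hp : p.Prime) :
    Nat.card {f : AddAut (ZMod p × ZMod (p ^ 2)) //
      f (1, 0) = ((1 : ZMod p), (0 : ZMod (p ^ 2))) ∧
      f (0, (p : ZMod (p ^ 2))) = ((0 : ZMod p), (p : ZMod (p ^ 2)))} = p ^ 2 := by
  haveI : NeZero p := ⟨hp.ne_zero⟩
  haveI : NeZero (p ^ 2) := ⟨pow_ne_zero 2 hp.ne_zero⟩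
  set S := {f : AddAut (ZMod p × ZMod (p ^ 2)) //
      f (1, 0) = ((1 : ZMod p), (0 : ZMod (p ^ 2))) ∧
      f (0, (p : ZMod (p ^ 2))) = ((0 : ZMod p), (p : ZMod (p ^ 2)))} with hS
  have hΦ : Function.Bijective
      (fun be : ZMod p × ZMod p => (⟨autOf p be.1 be.2, autOf_fix1 p be.1 be.2,
        autOf_fix2 p be.1 be.2⟩ : S)) := by
    constructor
    · rintro ⟨b, e⟩ ⟨b', e'⟩ h
      have h' : autOf p b e = autOf p b' e' := congrArg Subtype.val h
      have h01 := congrArg (fun f : AddAut (ZMod p × ZMod (p^2)) => f (0, 1)) h'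
      simp only [autOf_apply01, Prod.mk.injEq] at h01
      obtain ⟨hb, hdq⟩ := h01
      have hpe : ((p * e.val : ℕ) : ZMod (p^2)) = ((p * e'.val : ℕ) : ZMod (p^2)) := by
        push_cast
        linear_combination hdq
      have hlt : ∀ x : ZMod p, p * x.val < p ^ 2 := by
        intro x
        calc p * x.val < p * p := by
              exact Nat.mul_lt_mul_of_pos_left (ZMod.val_lt x) hp.pos
            _ = p ^ 2 := (sq p).symm
      have hv := congrArg ZMod.val hpe
      rw [ZMod.val_cast_of_lt (hlt e), ZMod.val_cast_of_lt (hlt e')] at hv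
      have he : e.val = e'.val := Nat.eq_of_mul_eq_mul_left hp.pos hv
      have he' : e = e' := ZMod.val_injective p he
      exact Prod.ext hb he'
    · rintro ⟨f, h1, h2⟩
      set b := (f (0, 1)).1 with hbdef
      set d := (f (0, 1)).2 with hddef
      -- p * d = p
      have hpd : (p : ZMod (p^2)) * d = p := by
        have h0p : ((0 : ZMod p), (p : ZMod (p ^ 2)))
            = p • ((0 : ZMod p), (1 : ZMod (p^2))) := by
          refine Prod.ext ?_ ?_ <;> simp [nsmul_eq_mul]
        have hh := h2
        rw [h0p, map_nsmul] at hh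
        have h2' := congrArg Prod.snd hh
        simpa [nsmul_eq_mul] using h2'
      -- p ∣ (d - 1).val
      have hdvd : (p : ℕ) ∣ (d - 1).val := by
        have hz : ((p * (d - 1).val : ℕ) : ZMod (p^2)) = 0 := by
          push_cast
          rw [ZMod.natCast_val, ZMod.cast_id]
          linear_combination hpd
        have hdd : (p ^ 2 : ℕ) ∣ p * (d - 1).val :=
          (ZMod.natCast_eq_zero_iff _ _).mp hz
        have hdd' : p * p ∣ p * (d - 1).val := by rw [← sq] at *; exact hdd
        exact (Nat.mul_dvd_mul_iff_left hp.pos).mp hdd'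
      obtain ⟨k, hk⟩ := hdvd
      set e : ZMod p := (k : ZMod p) with hedef
      have hd1 : d = 1 + (p : ZMod (p^2)) * e.val := by
        have hval : e.val = k % p := by simp [hedef, ZMod.val_natCast]
        have hk2 : ((k : ℕ) : ZMod (p^2))
            = (p : ZMod (p^2)) * ((k / p : ℕ) : ZMod (p^2)) + ((k % p : ℕ) : ZMod (p^2)) := by
          conv_lhs => rw [← Nat.div_add_mod k p]
          push_cast
          ring
        have h1' : (p : ZMod (p^2)) * ((e.val : ℕ) : ZMod (p^2))
            = (p : ZMod (p^2)) * ((k : ℕ) : ZMod (p^2)) := by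
          rw [hval, hk2]
          have h := pp0 p
          linear_combination (-((k / p : ℕ) : ZMod (p^2))) * h
        have h2' : ((d - 1).val : ZMod (p^2)) = d - 1 := by
          rw [ZMod.natCast_val, ZMod.cast_id]
        have : d - 1 = (p : ZMod (p^2)) * ((k : ℕ) : ZMod (p^2)) := by
          rw [← h2', hk]
          push_cast
          ring
        rw [h1', ← this]
        ring
      refine ⟨(b, e), Subtype.ext ?_⟩
      have hf01 : f (0, 1) = (b, d) := by
        refine Prod.ext ?_ ?_ <;> rfl
      refine AddEquiv.ext fun z => ?_
      calc autOf p b e z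
          = autOf p b e (z.1.val • ((1 : ZMod p), (0 : ZMod (p^2)))
              + z.2.val • ((0 : ZMod p), (1 : ZMod (p^2)))) := by rw [← decomp]
        _ = z.1.val • autOf p b e (1, 0) + z.2.val • autOf p b e (0, 1) := by
            rw [map_add, map_nsmul, map_nsmul]
        _ = z.1.val • ((1 : ZMod p), (0 : ZMod (p^2))) + z.2.val • (b, d) := by
            rw [autOf_fix1, autOf_apply01, hd1]
        _ = z.1.val • f (1, 0) + z.2.val • f (0, 1) := by rw [h1, hf01]
        _ = f z := by rw [← map_nsmul, ← map_nsmul, ← map_add, ← decomp]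
  have hequiv : Nat.card S = Nat.card (ZMod p × ZMod p) :=
    (Nat.card_eq_of_bijective _ hΦ).symm
  rw [hequiv, Nat.card_prod, Nat.card_zmod, ← sq]
end
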